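/- arXiv:2407.20110 — 6 statements merged into one kernel-verified Lean document; each statement's English description precedes it below -/
import Mathlib

section
/- Let G be a finite group containing an element g whose order is p₁p₂p₃ for three pairwise distinct primes p₁, p₂, p₃. Then the reduced power graph P*(G) is not claw-free; indeed the four vertices g, g^{p₁}, g^{p₂}, g^{p₃} induce a claw with central vertex g. -/
/-- Adjacency in the power graph: the two elements are distinct and one of the
two cyclic subgroups they generate is contained in the other. -/
def PowAdj {G : Type*} [Group G] (a b : G) : Prop :=
  a ≠ b ∧ (a ∈ Subgroup.zpowers b ∨ b ∈ Subgroup.zpowers a)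

/-- The reduced power graph `P*(G)`: the induced subgraph of the power graph
on the non-identity elements of `G`. -/
def reducedPowerGraph (G : Type*) [Group G] : SimpleGraph {g : G // g ≠ 1} where
  Adj a b := PowAdj (a : G) (b : G)
  symm := by
    constructor
    intro a b h
    exact ⟨h.1.symm, h.2.symm⟩
  loopless := by
    constructor
    intro a h
    exact h.1 rfl

/-- A graph is claw-free if it has no vertex with three pairwise distinct,
pairwise non-adjacent neighbours. -/
def IsClawFree {V : Type*} (Γ : SimpleGraph V) : Prop :=
  ¬ ∃ b a₁ a₂ a₃ : V, a₁ ≠ a₂ ∧ a₁ ≠ a₃ ∧ a₂ ≠ a₃ ∧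
      Γ.Adj b a₁ ∧ Γ.Adj b a₂ ∧ Γ.Adj b a₃ ∧
      ¬ Γ.Adj a₁ a₂ ∧ ¬ Γ.Adj a₁ a₃ ∧ ¬ Γ.Adj a₂ a₃

lemma ordPowAux {G : Type*} [Group G] [Finite G] (g : G) (q m : ℕ) (hq : 0 < q)
    (h : orderOf g = q * m) : orderOf (g ^ q) = m := by
  rw [orderOf_pow, h, Nat.gcd_eq_right (Dvd.intro m rfl), Nat.mul_div_cancel_left m hq]

lemma primeNotDvd {p a b : ℕ} (hp : p.Prime) (ha : a.Prime) (hb : b.Prime)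
    (hpa : p ≠ a) (hpb : p ≠ b) : ¬ p ∣ a * b := by
  intro h
  rcases hp.dvd_mul.mp h with h | h
  · exact hpa ((Nat.prime_dvd_prime_iff_eq hp ha).mp h)
  · exact hpb ((Nat.prime_dvd_prime_iff_eq hp hb).mp h)

theorem stmt_4 {G : Type*} [Group G] [Finite G] (g : G) (p₁ p₂ p₃ : ℕ)
    (hp₁ : p₁.Prime) (hp₂ : p₂.Prime) (hp₃ : p₃.Prime)
    (h12 : p₁ ≠ p₂) (h13 : p₁ ≠ p₃) (h23 : p₂ ≠ p₃)
    (hg : orderOf g = p₁ * p₂ * p₃) :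
    ¬ IsClawFree (reducedPowerGraph G) ∧
      g ≠ 1 ∧ g ^ p₁ ≠ 1 ∧ g ^ p₂ ≠ 1 ∧ g ^ p₃ ≠ 1 ∧
      g ^ p₁ ≠ g ^ p₂ ∧ g ^ p₁ ≠ g ^ p₃ ∧ g ^ p₂ ≠ g ^ p₃ ∧
      PowAdj g (g ^ p₁) ∧ PowAdj g (g ^ p₂) ∧ PowAdj g (g ^ p₃) ∧
      ¬ PowAdj (g ^ p₁) (g ^ p₂) ∧ ¬ PowAdj (g ^ p₁) (g ^ p₃) ∧
      ¬ PowAdj (g ^ p₂) (g ^ p₃) := by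
  have o1 : orderOf (g ^ p₁) = p₂ * p₃ := ordPowAux g p₁ _ hp₁.pos (by rw [hg]; ring)
  have o2 : orderOf (g ^ p₂) = p₁ * p₃ := ordPowAux g p₂ _ hp₂.pos (by rw [hg]; ring)
  have o3 : orderOf (g ^ p₃) = p₁ * p₂ := ordPowAux g p₃ _ hp₃.pos (by rw [hg]; ring)
  -- non-divisibilities between the pairwise orders
  have nd12 : ¬ orderOf (g ^ p₁) ∣ orderOf (g ^ p₂) := by
    rw [o1, o2]
    intro h
    exact primeNotDvd hp₂ hp₁ hp₃ h12.symm h23 ((dvd_mul_right p₂ p₃).trans h)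
  have nd21 : ¬ orderOf (g ^ p₂) ∣ orderOf (g ^ p₁) := by
    rw [o1, o2]
    intro h
    exact primeNotDvd hp₁ hp₂ hp₃ h12 h13 ((dvd_mul_right p₁ p₃).trans h)
  have nd13 : ¬ orderOf (g ^ p₁) ∣ orderOf (g ^ p₃) := by
    rw [o1, o3]
    intro h
    exact primeNotDvd hp₃ hp₁ hp₂ h13.symm h23.symm ((dvd_mul_left p₃ p₂).trans h)
  have nd31 : ¬ orderOf (g ^ p₃) ∣ orderOf (g ^ p₁) := by
    rw [o1, o3]
    intro h
    exact primeNotDvd hp₁ hp₂ hp₃ h12 h13 ((dvd_mul_right p₁ p₂).trans h)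
  have nd23 : ¬ orderOf (g ^ p₂) ∣ orderOf (g ^ p₃) := by
    rw [o2, o3]
    intro h
    exact primeNotDvd hp₃ hp₁ hp₂ h13.symm h23.symm ((dvd_mul_left p₃ p₁).trans h)
  have nd32 : ¬ orderOf (g ^ p₃) ∣ orderOf (g ^ p₂) := by
    rw [o2, o3]
    intro h
    exact primeNotDvd hp₂ hp₁ hp₃ h12.symm h23 ((dvd_mul_left p₂ p₁).trans h)
  -- basic facts
  have hg1 : g ≠ 1 := by
    intro h
    rw [h, orderOf_one] at hg
    exact Nat.Prime.one_lt hp₃ |>.ne' (by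
      have := hg.symm
      nlinarith [hp₁.two_le, hp₂.two_le, hp₃.two_le])
  have hne1 : ∀ q j k : ℕ, q.Prime → j.Prime → orderOf (g ^ q) = j * k → k.Prime → g ^ q ≠ 1 := by
    intro q j k _ hj ho hk h
    rw [h, orderOf_one] at ho
    exact Nat.Prime.one_lt hj |>.ne' (by nlinarith [hj.two_le, hk.two_le])
  have h1 : g ^ p₁ ≠ 1 := hne1 p₁ p₂ p₃ hp₁ hp₂ o1 hp₃
  have h2 : g ^ p₂ ≠ 1 := hne1 p₂ p₁ p₃ hp₂ hp₁ o2 hp₃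
  have h3 : g ^ p₃ ≠ 1 := hne1 p₃ p₁ p₂ hp₃ hp₁ o3 hp₂
  have ne12 : g ^ p₁ ≠ g ^ p₂ := fun h => nd12 (h ▸ dvd_refl _)
  have ne13 : g ^ p₁ ≠ g ^ p₃ := fun h => nd13 (h ▸ dvd_refl _)
  have ne23 : g ^ p₂ ≠ g ^ p₃ := fun h => nd23 (h ▸ dvd_refl _)
  have gne : ∀ q j k : ℕ, q.Prime → j.Prime → k.Prime → orderOf (g ^ q) = j * k →
      orderOf g = q * (j * k) → g ≠ g ^ q := by
    intro q j k hq hj hk ho ho' h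
    rw [← h, ho'] at ho
    have : q * (j * k) = 1 * (j * k) := by rw [one_mul, ho]
    exact hq.one_lt.ne' (Nat.eq_of_mul_eq_mul_right (Nat.mul_pos hj.pos hk.pos) this)
  have adj : ∀ q j k : ℕ, q.Prime → j.Prime → k.Prime → orderOf (g ^ q) = j * k →
      orderOf g = q * (j * k) → PowAdj g (g ^ q) := by
    intro q j k hq hj hk ho ho'
    exact ⟨gne q j k hq hj hk ho ho', Or.inr ⟨(q : ℤ), zpow_natCast g q⟩⟩
  have e1 : orderOf g = p₁ * (p₂ * p₃) := by rw [hg]; ring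
  have e2 : orderOf g = p₂ * (p₁ * p₃) := by rw [hg]; ring
  have e3 : orderOf g = p₃ * (p₁ * p₂) := by rw [hg]; ring
  have a1 := adj p₁ p₂ p₃ hp₁ hp₂ hp₃ o1 e1
  have a2 := adj p₂ p₁ p₃ hp₂ hp₁ hp₃ o2 e2
  have a3 := adj p₃ p₁ p₂ hp₃ hp₁ hp₂ o3 e3
  have na12 : ¬ PowAdj (g ^ p₁) (g ^ p₂) := by
    rintro ⟨-, h | h⟩
    · exact nd12 (orderOf_dvd_of_mem_zpowers h)
    · exact nd21 (orderOf_dvd_of_mem_zpowers h)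
  have na13 : ¬ PowAdj (g ^ p₁) (g ^ p₃) := by
    rintro ⟨-, h | h⟩
    · exact nd13 (orderOf_dvd_of_mem_zpowers h)
    · exact nd31 (orderOf_dvd_of_mem_zpowers h)
  have na23 : ¬ PowAdj (g ^ p₂) (g ^ p₃) := by
    rintro ⟨-, h | h⟩
    · exact nd23 (orderOf_dvd_of_mem_zpowers h)
    · exact nd32 (orderOf_dvd_of_mem_zpowers h)
  refine ⟨?_, hg1, h1, h2, h3, ne12, ne13, ne23, a1, a2, a3, na12, na13, na23⟩
  intro hcf
  exact hcf ⟨⟨g, hg1⟩, ⟨g ^ p₁, h1⟩, ⟨g ^ p₂, h2⟩, ⟨g ^ p₃, h3⟩,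
    fun h => ne12 (congrArg Subtype.val h),
    fun h => ne13 (congrArg Subtype.val h),
    fun h => ne23 (congrArg Subtype.val h),
    a1, a2, a3, na12, na13, na23⟩
end

section
/- Let G be a finite group containing an element g whose order is p₁²p₂² for two distinct primes p₁, p₂. Then the reduced power graph P*(G) is not claw-free; indeed the four vertices g, g^{p₁²}, g^{p₂²}, g^{p₁p₂} induce a claw with central vertex g. -/
theorem stmt_5 {G : Type*} [Group G] [Finite G] (g : G) (p₁ p₂ : ℕ)
    (hp₁ : p₁.Prime) (hp₂ : p₂.Prime) (h12 : p₁ ≠ p₂)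
    (hg : orderOf g = p₁ ^ 2 * p₂ ^ 2) :
    ¬ IsClawFree (reducedPowerGraph G) ∧
      g ≠ 1 ∧ g ^ (p₁ ^ 2) ≠ 1 ∧ g ^ (p₂ ^ 2) ≠ 1 ∧ g ^ (p₁ * p₂) ≠ 1 ∧
      g ^ (p₁ ^ 2) ≠ g ^ (p₂ ^ 2) ∧ g ^ (p₁ ^ 2) ≠ g ^ (p₁ * p₂) ∧
      g ^ (p₂ ^ 2) ≠ g ^ (p₁ * p₂) ∧
      PowAdj g (g ^ (p₁ ^ 2)) ∧ PowAdj g (g ^ (p₂ ^ 2)) ∧ PowAdj g (g ^ (p₁ * p₂)) ∧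
      ¬ PowAdj (g ^ (p₁ ^ 2)) (g ^ (p₂ ^ 2)) ∧
      ¬ PowAdj (g ^ (p₁ ^ 2)) (g ^ (p₁ * p₂)) ∧
      ¬ PowAdj (g ^ (p₂ ^ 2)) (g ^ (p₁ * p₂)) := by

  -- orders of the three powers
  have h1 : orderOf (g ^ (p₁ ^ 2)) = p₂ ^ 2 := by
    rw [orderOf_pow, hg,
      Nat.gcd_eq_right (show p₁ ^ 2 ∣ p₁ ^ 2 * p₂ ^ 2 from dvd_mul_right _ _),
      Nat.mul_div_cancel_left _ (pow_pos hp₁.pos 2)]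
  have h2 : orderOf (g ^ (p₂ ^ 2)) = p₁ ^ 2 := by
    rw [orderOf_pow, hg,
      Nat.gcd_eq_right (show p₂ ^ 2 ∣ p₁ ^ 2 * p₂ ^ 2 from dvd_mul_left _ _),
      Nat.mul_div_cancel _ (pow_pos hp₂.pos 2)]
  have h3 : orderOf (g ^ (p₁ * p₂)) = p₁ * p₂ := by
    rw [orderOf_pow, hg,
      Nat.gcd_eq_right (show p₁ * p₂ ∣ p₁ ^ 2 * p₂ ^ 2 from ⟨p₁ * p₂, by ring⟩),
      show p₁ ^ 2 * p₂ ^ 2 = (p₁ * p₂) * (p₁ * p₂) by ring,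
      Nat.mul_div_cancel _ (Nat.mul_pos hp₁.pos hp₂.pos)]
  have hp12 : ¬ p₁ ∣ p₂ := fun h => h12 ((Nat.prime_dvd_prime_iff_eq hp₁ hp₂).mp h)
  have hp21 : ¬ p₂ ∣ p₁ := fun h => h12.symm ((Nat.prime_dvd_prime_iff_eq hp₂ hp₁).mp h)
  -- non-identity
  have hg1 : g ≠ 1 := by
    intro h
    rw [h, orderOf_one] at hg
    exact absurd hg (one_lt_mul (Nat.one_lt_pow two_ne_zero hp₁.one_lt).le
      (Nat.one_lt_pow two_ne_zero hp₂.one_lt)).ne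
  have ha1 : g ^ (p₁ ^ 2) ≠ 1 := fun h => by
    rw [h, orderOf_one] at h1
    exact (Nat.one_lt_pow two_ne_zero hp₂.one_lt).ne h1
  have ha2 : g ^ (p₂ ^ 2) ≠ 1 := fun h => by
    rw [h, orderOf_one] at h2
    exact (Nat.one_lt_pow two_ne_zero hp₁.one_lt).ne h2
  have ha3 : g ^ (p₁ * p₂) ≠ 1 := fun h => by
    rw [h, orderOf_one] at h3
    exact (one_lt_mul hp₁.one_le hp₂.one_lt).ne h3
  -- pairwise distinct
  have hd12 : g ^ (p₁ ^ 2) ≠ g ^ (p₂ ^ 2) := fun h => by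
    rw [h, h2] at h1
    exact h12 (Nat.pow_left_injective two_ne_zero h1)
  have hd13 : g ^ (p₁ ^ 2) ≠ g ^ (p₁ * p₂) := fun h => by
    rw [h, h3] at h1
    have h' : p₂ * p₂ = p₁ * p₂ := by rw [← sq]; exact h1.symm
    exact h12 (Nat.eq_of_mul_eq_mul_right hp₂.pos h').symm
  have hd23 : g ^ (p₂ ^ 2) ≠ g ^ (p₁ * p₂) := fun h => by
    rw [h, h3] at h2
    have h' : p₁ * p₁ = p₁ * p₂ := by rw [← sq]; exact h2.symm
    exact h12 (Nat.eq_of_mul_eq_mul_left hp₁.pos h')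
  have hgd : ∀ k : ℕ, orderOf (g ^ k) ≠ orderOf g → g ≠ g ^ k := by
    intro k hk h
    exact hk (by rw [← h])
  -- adjacencies
  have mem : ∀ k : ℕ, g ^ k ∈ Subgroup.zpowers g := fun k =>
    Subgroup.mem_zpowers_iff.mpr ⟨(k : ℤ), zpow_natCast g k⟩
  have hlt1 : p₂ ^ 2 < p₁ ^ 2 * p₂ ^ 2 := by
    nth_rewrite 1 [← one_mul (p₂ ^ 2)]
    exact (Nat.mul_lt_mul_right (pow_pos hp₂.pos 2)).mpr (Nat.one_lt_pow two_ne_zero hp₁.one_lt)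
  have hlt2 : p₁ ^ 2 < p₁ ^ 2 * p₂ ^ 2 := by
    nth_rewrite 1 [← mul_one (p₁ ^ 2)]
    exact (Nat.mul_lt_mul_left (pow_pos hp₁.pos 2)).mpr (Nat.one_lt_pow two_ne_zero hp₂.one_lt)
  have hlt3 : p₁ * p₂ < p₁ ^ 2 * p₂ ^ 2 := by
    calc p₁ * p₂ = (p₁ * p₂) * 1 := (mul_one _).symm
      _ < (p₁ * p₂) * (p₁ * p₂) := by
          exact (Nat.mul_lt_mul_left (Nat.mul_pos hp₁.pos hp₂.pos)).mpr
            (one_lt_mul hp₁.one_le hp₂.one_lt)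
      _ = p₁ ^ 2 * p₂ ^ 2 := by ring
  have adj1 : PowAdj g (g ^ (p₁ ^ 2)) :=
    ⟨hgd _ (by rw [h1, hg]; exact hlt1.ne), Or.inr (mem _)⟩
  have adj2 : PowAdj g (g ^ (p₂ ^ 2)) :=
    ⟨hgd _ (by rw [h2, hg]; exact hlt2.ne), Or.inr (mem _)⟩
  have adj3 : PowAdj g (g ^ (p₁ * p₂)) :=
    ⟨hgd _ (by rw [h3, hg]; exact hlt3.ne), Or.inr (mem _)⟩
  -- non-adjacencies via order divisibility
  have div_of : ∀ a b : G, a ∈ Subgroup.zpowers b → orderOf a ∣ orderOf b :=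
    fun a b h => orderOf_dvd_of_mem_zpowers h
  have nd12 : ¬ PowAdj (g ^ (p₁ ^ 2)) (g ^ (p₂ ^ 2)) := by
    rintro ⟨-, h | h⟩
    · have := div_of _ _ h; rw [h1, h2] at this
      exact hp21 (hp₂.dvd_of_dvd_pow ((dvd_pow_self p₂ two_ne_zero).trans this))
    · have := div_of _ _ h; rw [h1, h2] at this
      exact hp12 (hp₁.dvd_of_dvd_pow ((dvd_pow_self p₁ two_ne_zero).trans this))
  have nd13 : ¬ PowAdj (g ^ (p₁ ^ 2)) (g ^ (p₁ * p₂)) := by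
    rintro ⟨-, h | h⟩
    · have := div_of _ _ h; rw [h1, h3] at this
      have h' : p₂ * p₂ ∣ p₁ * p₂ := by rwa [← sq]
      exact hp21 ((Nat.mul_dvd_mul_iff_right hp₂.pos).mp h')
    · have := div_of _ _ h; rw [h1, h3] at this
      exact hp12 (hp₁.dvd_of_dvd_pow ((dvd_mul_right p₁ p₂).trans this))
  have nd23 : ¬ PowAdj (g ^ (p₂ ^ 2)) (g ^ (p₁ * p₂)) := by
    rintro ⟨-, h | h⟩
    · have := div_of _ _ h; rw [h2, h3] at this
      have h' : p₁ * p₁ ∣ p₁ * p₂ := by rwa [← sq]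
      exact hp12 ((Nat.mul_dvd_mul_iff_left hp₁.pos).mp h')
    · have := div_of _ _ h; rw [h2, h3] at this
      exact hp21 (hp₂.dvd_of_dvd_pow ((dvd_mul_left p₂ p₁).trans this))
  refine ⟨?_, hg1, ha1, ha2, ha3, hd12, hd13, hd23, adj1, adj2, adj3, nd12, nd13, nd23⟩
  intro hcf
  exact hcf ⟨⟨g, hg1⟩, ⟨g ^ (p₁ ^ 2), ha1⟩, ⟨g ^ (p₂ ^ 2), ha2⟩, ⟨g ^ (p₁ * p₂), ha3⟩,
    fun h => hd12 (congrArg Subtype.val h), fun h => hd13 (congrArg Subtype.val h),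
    fun h => hd23 (congrArg Subtype.val h),
    adj1, adj2, adj3, nd12, nd13, nd23⟩
end

section
/- Let G be a cyclic group of order p^a·q, where p and q are distinct primes and a is a positive integer. Then the reduced power graph P*(G) is claw-free. -/
/-- In a finite cyclic group, if the order of `x` divides the order of `y`,
then `x` lies in the cyclic subgroup generated by `y`. -/
lemma mem_zpowers_of_orderOf_dvd' {G : Type*} [Group G] [Finite G] (hG : IsCyclic G)
    {x y : G} (h : orderOf x ∣ orderOf y) : x ∈ Subgroup.zpowers y := by
  classical
  cases nonempty_fintype G
  set n := orderOf y with hn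
  have hn0 : 0 < n := orderOf_pos y
  have hcardle : (Finset.univ.filter (fun b : G => b ^ n = 1)).card ≤ n :=
    IsCyclic.card_pow_eq_one_le hn0
  have hsub : (Subgroup.zpowers y : Set G).toFinset ⊆
      Finset.univ.filter (fun b : G => b ^ n = 1) := by
    intro b hb
    simp only [Set.mem_toFinset, SetLike.mem_coe, Subgroup.mem_zpowers_iff] at hb
    obtain ⟨k, rfl⟩ := hb
    simp only [Finset.mem_filter, Finset.mem_univ, true_and]
    rw [← zpow_natCast, ← zpow_mul, mul_comm, zpow_mul, zpow_natCast, pow_orderOf_eq_one,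
      one_zpow]
  have hcardz : (Subgroup.zpowers y : Set G).toFinset.card = n := by
    rw [Set.toFinset_card, ← Nat.card_eq_fintype_card]
    simpa using Nat.card_zpowers y
  have heq : (Subgroup.zpowers y : Set G).toFinset =
      Finset.univ.filter (fun b : G => b ^ n = 1) :=
    Finset.eq_of_subset_of_card_le hsub (by omega)
  have hx : x ∈ Finset.univ.filter (fun b : G => b ^ n = 1) := by
    simp only [Finset.mem_filter, Finset.mem_univ, true_and]
    exact orderOf_dvd_iff_pow_eq_one.mp h
  rw [← heq] at hx
  simpa using hx

/-- Divisors of a prime power are pairwise comparable. -/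
lemma dvd_or_dvd_of_dvd_prime_pow {p n : ℕ} (hp : p.Prime) {d e : ℕ}
    (hd : d ∣ p ^ n) (he : e ∣ p ^ n) : d ∣ e ∨ e ∣ d := by
  obtain ⟨i, hi, rfl⟩ := (Nat.dvd_prime_pow hp).mp hd
  obtain ⟨j, hj, rfl⟩ := (Nat.dvd_prime_pow hp).mp he
  rcases le_total i j with h | h
  · exact Or.inl (pow_dvd_pow p h)
  · exact Or.inr (pow_dvd_pow p h)

/-- Two divisors of `p ^ a * q` on which `q`-divisibility agrees are comparable. -/
lemma key_comp {p q a : ℕ} (hp : p.Prime) (hq : q.Prime)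
    {d e : ℕ} (hd : d ∣ p ^ a * q) (he : e ∣ p ^ a * q)
    (hj : (q ∣ d) ↔ (q ∣ e)) : d ∣ e ∨ e ∣ d := by
  by_cases hqd : q ∣ d
  · have hqe : q ∣ e := hj.mp hqd
    obtain ⟨d', rfl⟩ := hqd
    obtain ⟨e', rfl⟩ := hqe
    have hq0 : 0 < q := hq.pos
    have hd' : d' ∣ p ^ a := by
      have : q * d' ∣ q * p ^ a := by rwa [mul_comm (p ^ a) q] at hd
      exact (mul_dvd_mul_iff_left hq0.ne').mp this
    have he' : e' ∣ p ^ a := by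
      have : q * e' ∣ q * p ^ a := by rwa [mul_comm (p ^ a) q] at he
      exact (mul_dvd_mul_iff_left hq0.ne').mp this
    rcases dvd_or_dvd_of_dvd_prime_pow hp hd' he' with h | h
    · exact Or.inl (mul_dvd_mul_left q h)
    · exact Or.inr (mul_dvd_mul_left q h)
  · have hqe : ¬ q ∣ e := fun h => hqd (hj.mpr h)
    have hd' : d ∣ p ^ a :=
      (Nat.Coprime.dvd_of_dvd_mul_right
        ((Nat.Prime.coprime_iff_not_dvd hq).mpr hqd).symm hd)
    have he' : e ∣ p ^ a :=
      (Nat.Coprime.dvd_of_dvd_mul_right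
        ((Nat.Prime.coprime_iff_not_dvd hq).mpr hqe).symm he)
    exact dvd_or_dvd_of_dvd_prime_pow hp hd' he'

theorem stmt_6 {G : Type*} [Group G] [Finite G] (hG : IsCyclic G)
    (p q a : ℕ) (hp : p.Prime) (hq : q.Prime) (hpq : p ≠ q) (ha : 1 ≤ a)
    (hcard : Nat.card G = p ^ a * q) :
    IsClawFree (reducedPowerGraph G) := by
  rintro ⟨b, a₁, a₂, a₃, h12, h13, h23, -, -, -, n12, n13, n23⟩
  -- from non-adjacency and distinctness, orders are non-comparable
  have key : ∀ x y : {g : G // g ≠ 1}, x ≠ y →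
      ¬ (reducedPowerGraph G).Adj x y →
      ¬ (orderOf (x : G) ∣ orderOf (y : G)) ∧ ¬ (orderOf (y : G) ∣ orderOf (x : G)) := by
    intro x y hxy hadj
    constructor
    · intro hdvd
      exact hadj ⟨fun h => hxy (Subtype.ext h),
        Or.inl (mem_zpowers_of_orderOf_dvd' hG hdvd)⟩
    · intro hdvd
      exact hadj ⟨fun h => hxy (Subtype.ext h),
        Or.inr (mem_zpowers_of_orderOf_dvd' hG hdvd)⟩
  have k12 := key _ _ h12 n12
  have k13 := key _ _ h13 n13
  have k23 := key _ _ h23 n23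
  have hd1 : orderOf (a₁ : G) ∣ p ^ a * q := hcard ▸ orderOf_dvd_natCard _
  have hd2 : orderOf (a₂ : G) ∣ p ^ a * q := hcard ▸ orderOf_dvd_natCard _
  have hd3 : orderOf (a₃ : G) ∣ p ^ a * q := hcard ▸ orderOf_dvd_natCard _
  have pig : ((q ∣ orderOf (a₁ : G)) ↔ (q ∣ orderOf (a₂ : G))) ∨
      ((q ∣ orderOf (a₁ : G)) ↔ (q ∣ orderOf (a₃ : G))) ∨
      ((q ∣ orderOf (a₂ : G)) ↔ (q ∣ orderOf (a₃ : G))) := by tauto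
  rcases pig with h | h | h
  · rcases key_comp hp hq hd1 hd2 h with hc | hc
    · exact k12.1 hc
    · exact k12.2 hc
  · rcases key_comp hp hq hd1 hd3 h with hc | hc
    · exact k13.1 hc
    · exact k13.2 hc
  · rcases key_comp hp hq hd2 hd3 h with hc | hc
    · exact k23.1 hc
    · exact k23.2 hc
end

section
/- Let p be an odd prime and G ≅ C_{p²} × C_p, or let p = 2 and G ≅ C₄ × C₂ × C₂. Then the reduced power graph P*(G) is not claw-free. -/
lemma mem_zpowers_mult {A : Type*} [AddGroup A] (x y : Multiplicative A) :
    x ∈ Subgroup.zpowers y ↔ ∃ k : ℤ, k • y.toAdd = x.toAdd := by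
  rw [Subgroup.mem_zpowers_iff]
  constructor
  · rintro ⟨k, rfl⟩; exact ⟨k, by simp⟩
  · rintro ⟨k, hk⟩; exact ⟨k, Multiplicative.toAdd.injective (by simpa using hk)⟩

lemma mem_zpowers_map {G H : Type*} [Group G] [Group H] (e : G ≃* H) {a b : G}
    (h : a ∈ Subgroup.zpowers b) : e a ∈ Subgroup.zpowers (e b) := by
  obtain ⟨k, rfl⟩ := h
  exact ⟨k, (map_zpow e b k).symm⟩

lemma powAdj_map {G H : Type*} [Group G] [Group H] (e : G ≃* H) {a b : G}
    (h : PowAdj a b) : PowAdj (e a) (e b) := by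
  refine ⟨fun hh => h.1 (e.injective hh), ?_⟩
  rcases h.2 with h2 | h2
  · exact Or.inl (mem_zpowers_map e h2)
  · exact Or.inr (mem_zpowers_map e h2)

lemma powAdj_map_iff {G H : Type*} [Group G] [Group H] (e : G ≃* H) (a b : G) :
    PowAdj (e a) (e b) ↔ PowAdj a b := by
  constructor
  · intro h
    have := powAdj_map e.symm h
    simpa using this
  · exact powAdj_map e

/-- Transferring a claw along a group isomorphism. -/
lemma notClawFree_of_equiv {G H : Type*} [Group G] [Group H] (e : G ≃* H)
    (h : ¬ IsClawFree (reducedPowerGraph G)) : ¬ IsClawFree (reducedPowerGraph H) := by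
  rw [IsClawFree, not_not] at h ⊢
  obtain ⟨b, a₁, a₂, a₃, h12, h13, h23, hb1, hb2, hb3, n12, n13, n23⟩ := h
  have he1 : ∀ g : G, g ≠ 1 → e g ≠ 1 := fun g hg hh => hg (by simpa using e.injective (by simpa using hh))
  refine ⟨⟨e b, he1 _ b.2⟩, ⟨e a₁, he1 _ a₁.2⟩, ⟨e a₂, he1 _ a₂.2⟩, ⟨e a₃, he1 _ a₃.2⟩,
    ?_, ?_, ?_, ?_, ?_, ?_, ?_, ?_, ?_⟩
  · exact fun hh => h12 (Subtype.ext (e.injective (congrArg Subtype.val hh)))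
  · exact fun hh => h13 (Subtype.ext (e.injective (congrArg Subtype.val hh)))
  · exact fun hh => h23 (Subtype.ext (e.injective (congrArg Subtype.val hh)))
  · exact powAdj_map e hb1
  · exact powAdj_map e hb2
  · exact powAdj_map e hb3
  · exact fun hh => n12 ((powAdj_map_iff e _ _).mp hh)
  · exact fun hh => n13 ((powAdj_map_iff e _ _).mp hh)
  · exact fun hh => n23 ((powAdj_map_iff e _ _).mp hh)

lemma claw_odd (p : ℕ) (hp : p.Prime) (hodd : Odd p) :
    ¬ IsClawFree (reducedPowerGraph (Multiplicative (ZMod (p ^ 2) × ZMod p))) := by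
  haveI : Fact p.Prime := ⟨hp⟩
  haveI : Fact (1 < p) := ⟨hp.one_lt⟩
  haveI : Fact (1 < p ^ 2) := ⟨Nat.one_lt_pow two_ne_zero hp.one_lt⟩
  have hp2 : 2 < p := lt_of_le_of_ne hp.two_le (fun hh => by rcases hodd with ⟨m, hm⟩; omega)
  -- the ring hom from ZMod (p^2) down to ZMod p
  let f : ZMod (p ^ 2) →+* ZMod p := ZMod.castHom (dvd_pow_self p two_ne_zero) (ZMod p)
  -- group elements
  set b : Multiplicative (ZMod (p ^ 2) × ZMod p) :=
    Multiplicative.ofAdd ((p : ZMod (p ^ 2)), 0) with hb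
  have ha : ∀ i : ZMod p, (Multiplicative.ofAdd ((1 : ZMod (p ^ 2)), i) :
      Multiplicative (ZMod (p ^ 2) × ZMod p)) ≠ 1 := by
    intro i hh
    have : ((1 : ZMod (p ^ 2)), i) = (0, 0) := hh
    exact one_ne_zero (congrArg Prod.fst this)
  have hbne : b ≠ 1 := by
    intro hh
    have : ((p : ZMod (p ^ 2)), (0 : ZMod p)) = (0, 0) := hh
    have h0 : (p : ZMod (p ^ 2)) = 0 := congrArg Prod.fst this
    rw [ZMod.natCast_eq_zero_iff] at h0
    have := Nat.le_of_dvd hp.pos h0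
    nlinarith [hp.one_lt]
  -- b ≠ aᵢ
  have hbnea : ∀ i : ZMod p, b ≠ Multiplicative.ofAdd ((1 : ZMod (p ^ 2)), i) := by
    intro i hh
    have : ((p : ZMod (p ^ 2)), (0 : ZMod p)) = (1, i) := hh
    have h1 : (p : ZMod (p ^ 2)) = 1 := congrArg Prod.fst this
    have h2 := congrArg f h1
    rw [map_one, map_natCast, ZMod.natCast_self] at h2
    exact zero_ne_one h2
  -- b is a power of each aᵢ
  have hmem : ∀ i : ZMod p, b ∈ Subgroup.zpowers
      (Multiplicative.ofAdd ((1 : ZMod (p ^ 2)), i) :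
        Multiplicative (ZMod (p ^ 2) × ZMod p)) := by
    intro i
    rw [mem_zpowers_mult]
    refine ⟨(p : ℤ), ?_⟩
    simp [hb, Prod.ext_iff, zsmul_eq_mul]
  -- distinct i j give non-adjacent aᵢ, aⱼ
  have hnmem : ∀ i j : ZMod p, i ≠ j →
      (Multiplicative.ofAdd ((1 : ZMod (p ^ 2)), i) :
        Multiplicative (ZMod (p ^ 2) × ZMod p)) ∉ Subgroup.zpowers
      (Multiplicative.ofAdd ((1 : ZMod (p ^ 2)), j) :
        Multiplicative (ZMod (p ^ 2) × ZMod p)) := by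
    intro i j hij hh
    rw [mem_zpowers_mult] at hh
    obtain ⟨k, hk⟩ := hh
    simp only [toAdd_ofAdd, Prod.smul_mk, Prod.mk.injEq, zsmul_eq_mul,
      mul_one] at hk
    obtain ⟨hk1, hk2⟩ := hk
    have := congrArg f hk1
    simp only [map_intCast, map_one, f] at this
    rw [this, one_mul] at hk2
    exact hij hk2.symm
  rw [IsClawFree, not_not]
  refine ⟨⟨b, hbne⟩,
    ⟨Multiplicative.ofAdd ((1 : ZMod (p ^ 2)), (0 : ZMod p)), ha 0⟩,
    ⟨Multiplicative.ofAdd ((1 : ZMod (p ^ 2)), (1 : ZMod p)), ha 1⟩,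
    ⟨Multiplicative.ofAdd ((1 : ZMod (p ^ 2)), (2 : ZMod p)), ha 2⟩, ?_, ?_, ?_, ?_, ?_, ?_, ?_, ?_, ?_⟩
  · intro hh
    have : ((1 : ZMod (p ^ 2)), (0 : ZMod p)) = (1, 1) := congrArg Subtype.val hh
    exact zero_ne_one (congrArg Prod.snd this)
  · intro hh
    have : ((1 : ZMod (p ^ 2)), (0 : ZMod p)) = (1, 2) := congrArg Subtype.val hh
    have h2 : (0 : ZMod p) = 2 := congrArg Prod.snd this
    have h3 : ((2 : ℕ) : ZMod p) = 0 := by exact_mod_cast h2.symm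
    rw [ZMod.natCast_eq_zero_iff] at h3
    exact absurd (Nat.le_of_dvd (by norm_num) h3) (by omega)
  · intro hh
    have : ((1 : ZMod (p ^ 2)), (1 : ZMod p)) = (1, 2) := congrArg Subtype.val hh
    have h2 : (1 : ZMod p) = 2 := congrArg Prod.snd this
    have h2' : (2 : ZMod p) - 1 = 0 := by rw [← h2]; ring
    have h3 : ((1 : ℕ) : ZMod p) = 0 := by push_cast; linear_combination h2'
    rw [ZMod.natCast_eq_zero_iff] at h3
    exact absurd (Nat.le_of_dvd (by norm_num) h3) (by omega)
  · exact ⟨hbnea 0, Or.inl (hmem 0)⟩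
  · exact ⟨hbnea 1, Or.inl (hmem 1)⟩
  · exact ⟨hbnea 2, Or.inl (hmem 2)⟩
  · rintro ⟨-, hh | hh⟩
    · exact hnmem 0 1 (by
        intro hc
        have : ((1:ℕ) : ZMod p) = 0 := by exact_mod_cast hc.symm
        rw [ZMod.natCast_eq_zero_iff] at this; exact absurd (Nat.le_of_dvd (by norm_num) this) (by omega)) hh
    · exact hnmem 1 0 (by
        intro hc
        have : ((1:ℕ) : ZMod p) = 0 := by exact_mod_cast hc
        rw [ZMod.natCast_eq_zero_iff] at this; exact absurd (Nat.le_of_dvd (by norm_num) this) (by omega)) hh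
  · rintro ⟨-, hh | hh⟩
    · exact hnmem 0 2 (by
        intro hc
        have : ((2:ℕ) : ZMod p) = 0 := by exact_mod_cast hc.symm
        rw [ZMod.natCast_eq_zero_iff] at this; exact absurd (Nat.le_of_dvd (by norm_num) this) (by omega)) hh
    · exact hnmem 2 0 (by
        intro hc
        have : ((2:ℕ) : ZMod p) = 0 := by exact_mod_cast hc
        rw [ZMod.natCast_eq_zero_iff] at this; exact absurd (Nat.le_of_dvd (by norm_num) this) (by omega)) hh
  · rintro ⟨-, hh | hh⟩
    · exact hnmem 1 2 (by
        intro hc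
        have h2' : (2 : ZMod p) - 1 = 0 := by rw [← hc]; ring
        have : ((1:ℕ) : ZMod p) = 0 := by push_cast; linear_combination h2'
        rw [ZMod.natCast_eq_zero_iff] at this; exact absurd (Nat.le_of_dvd (by norm_num) this) (by omega)) hh
    · exact hnmem 2 1 (by
        intro hc
        have h2' : (2 : ZMod p) - 1 = 0 := by rw [hc]; ring
        have : ((1:ℕ) : ZMod p) = 0 := by push_cast; linear_combination h2'
        rw [ZMod.natCast_eq_zero_iff] at this; exact absurd (Nat.le_of_dvd (by norm_num) this) (by omega)) hh

lemma claw_two :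
    ¬ IsClawFree (reducedPowerGraph (Multiplicative (ZMod 4 × ZMod 2 × ZMod 2))) := by
  let f : ZMod 4 →+* ZMod 2 := ZMod.castHom (by norm_num : (2:ℕ) ∣ 4) (ZMod 2)
  set b : Multiplicative (ZMod 4 × ZMod 2 × ZMod 2) :=
    Multiplicative.ofAdd ((2 : ZMod 4), 0, 0) with hb
  have ha : ∀ v w : ZMod 2, (Multiplicative.ofAdd ((1 : ZMod 4), v, w) :
      Multiplicative (ZMod 4 × ZMod 2 × ZMod 2)) ≠ 1 := by
    intro v w hh
    have : ((1 : ZMod 4), v, w) = (0, 0, 0) := hh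
    have h1 : (1 : ZMod 4) = 0 := congrArg Prod.fst this
    exact absurd h1 (by decide)
  have hbne : b ≠ 1 := by
    intro hh
    have : ((2 : ZMod 4), (0 : ZMod 2), (0 : ZMod 2)) = (0, 0, 0) := hh
    have h0 : (2 : ZMod 4) = 0 := congrArg Prod.fst this
    exact absurd h0 (by decide)
  have hbnea : ∀ v w : ZMod 2, b ≠ Multiplicative.ofAdd ((1 : ZMod 4), v, w) := by
    intro v w hh
    have : ((2 : ZMod 4), (0 : ZMod 2), (0 : ZMod 2)) = (1, v, w) := hh
    have h1 : (2 : ZMod 4) = 1 := congrArg Prod.fst this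
    exact absurd h1 (by decide)
  have hmem : ∀ v w : ZMod 2, b ∈ Subgroup.zpowers
      (Multiplicative.ofAdd ((1 : ZMod 4), v, w) :
        Multiplicative (ZMod 4 × ZMod 2 × ZMod 2)) := by
    intro v w
    rw [mem_zpowers_mult]
    refine ⟨2, ?_⟩
    simp only [toAdd_ofAdd, hb, Prod.smul_mk, Prod.mk.injEq, zsmul_eq_mul,
      mul_one]
    refine ⟨by decide, ?_, ?_⟩ <;> · rw [show ((2:ℤ) : ZMod 2) = 0 by decide, zero_mul]
  have hnmem : ∀ v w v' w' : ZMod 2, (v, w) ≠ (v', w') →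
      (Multiplicative.ofAdd ((1 : ZMod 4), v, w) :
        Multiplicative (ZMod 4 × ZMod 2 × ZMod 2)) ∉ Subgroup.zpowers
      (Multiplicative.ofAdd ((1 : ZMod 4), v', w') :
        Multiplicative (ZMod 4 × ZMod 2 × ZMod 2)) := by
    intro v w v' w' hne hh
    rw [mem_zpowers_mult] at hh
    obtain ⟨k, hk⟩ := hh
    simp only [toAdd_ofAdd, Prod.smul_mk, Prod.mk.injEq, zsmul_eq_mul,
      mul_one] at hk
    obtain ⟨hk1, hk2, hk3⟩ := hk
    have hcast := congrArg f hk1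
    simp only [map_intCast, map_one, f] at hcast
    rw [hcast, one_mul] at hk2 hk3
    exact hne (by rw [hk2, hk3])
  rw [IsClawFree, not_not]
  refine ⟨⟨b, hbne⟩,
    ⟨Multiplicative.ofAdd ((1 : ZMod 4), 0, 0), ha 0 0⟩,
    ⟨Multiplicative.ofAdd ((1 : ZMod 4), 1, 0), ha 1 0⟩,
    ⟨Multiplicative.ofAdd ((1 : ZMod 4), 0, 1), ha 0 1⟩, ?_, ?_, ?_, ?_, ?_, ?_, ?_, ?_, ?_⟩
  · intro hh
    have : ((1 : ZMod 4), (0:ZMod 2), (0:ZMod 2)) = (1, 1, 0) := congrArg Subtype.val hh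
    exact absurd this (by decide)
  · intro hh
    have : ((1 : ZMod 4), (0:ZMod 2), (0:ZMod 2)) = (1, 0, 1) := congrArg Subtype.val hh
    exact absurd this (by decide)
  · intro hh
    have : ((1 : ZMod 4), (1:ZMod 2), (0:ZMod 2)) = (1, 0, 1) := congrArg Subtype.val hh
    exact absurd this (by decide)
  · exact ⟨hbnea 0 0, Or.inl (hmem 0 0)⟩
  · exact ⟨hbnea 1 0, Or.inl (hmem 1 0)⟩
  · exact ⟨hbnea 0 1, Or.inl (hmem 0 1)⟩
  · rintro ⟨-, hh | hh⟩
    · exact hnmem 0 0 1 0 (by decide) hh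
    · exact hnmem 1 0 0 0 (by decide) hh
  · rintro ⟨-, hh | hh⟩
    · exact hnmem 0 0 0 1 (by decide) hh
    · exact hnmem 0 1 0 0 (by decide) hh
  · rintro ⟨-, hh | hh⟩
    · exact hnmem 1 0 0 1 (by decide) hh
    · exact hnmem 0 1 1 0 (by decide) hh

theorem stmt_7 {G : Type*} [Group G] (p : ℕ) (hp : p.Prime)
    (h : (Odd p ∧ Nonempty (G ≃* Multiplicative (ZMod (p ^ 2) × ZMod p))) ∨
      (p = 2 ∧ Nonempty (G ≃* Multiplicative (ZMod 4 × ZMod 2 × ZMod 2)))) :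
    ¬ IsClawFree (reducedPowerGraph G) := by
  rcases h with ⟨hodd, ⟨e⟩⟩ | ⟨rfl, ⟨e⟩⟩
  · exact notClawFree_of_equiv e.symm (claw_odd p hp hodd)
  · exact notClawFree_of_equiv e.symm claw_two
end

section
/- Let p be an odd prime and let G be a finite p-group. Then the reduced power graph P*(G) is claw-free if and only if G is cyclic or G has exponent p. -/
open Subgroup

namespace ClawAux


variable {G : Type*} [Group G]

lemma exists_pow_eq [Finite G] {a b : G} (h : b ∈ Subgroup.zpowers a) :
    ∃ n : ℕ, a ^ n = b := by
  have hfin : IsOfFinOrder a := isOfFinOrder_of_finite a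
  rw [← hfin.mem_powers_iff_mem_zpowers] at h
  exact h

lemma zpowers_eq_of_mem [Finite G] {a b : G} (h : b ∈ Subgroup.zpowers a)
    (ho : orderOf b = orderOf a) : Subgroup.zpowers b = Subgroup.zpowers a := by
  refine Subgroup.eq_of_le_of_card_ge (Subgroup.zpowers_le.mpr h) ?_
  rw [Nat.card_zpowers, Nat.card_zpowers, ho]

lemma mem_zpowers_zpow {z : G} (d : ℤ) (hd : Int.gcd d (orderOf z) = 1) :
    z ∈ Subgroup.zpowers (z ^ d) := by
  have hb := Int.gcd_eq_gcd_ab d (orderOf z)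
  rw [hd] at hb
  have hz : z ^ ((orderOf z : ℤ) * Int.gcdB d (orderOf z)) = 1 := by
    rw [zpow_mul, zpow_natCast, pow_orderOf_eq_one, one_zpow]
  have key : (z ^ d) ^ Int.gcdA d (orderOf z) = z := by
    rw [← zpow_mul]
    calc z ^ (d * Int.gcdA d (orderOf z))
        = z ^ (d * Int.gcdA d (orderOf z)) * z ^ ((orderOf z : ℤ) * Int.gcdB d (orderOf z)) := by
          rw [hz, mul_one]
    _ = z ^ (d * Int.gcdA d (orderOf z) + (orderOf z : ℤ) * Int.gcdB d (orderOf z)) := by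
          rw [zpow_add]
    _ = z ^ (1 : ℤ) := by rw [← hb]; norm_num
    _ = z := zpow_one z
  exact Subgroup.mem_zpowers_iff.mpr ⟨_, key⟩

lemma mem_zpowers_pow {z : G} (d : ℕ) (hd : Nat.gcd d (orderOf z) = 1) :
    z ∈ Subgroup.zpowers (z ^ d) := by
  have := mem_zpowers_zpow (z := z) (d : ℤ) (by simpa using hd)
  rwa [zpow_natCast] at this

lemma zpowers_comparable {p : ℕ} (hp : p.Prime) {y g h : G} {m : ℕ}
    (hy : orderOf y = p ^ m) (hg : g ∈ Subgroup.zpowers y) (hh : h ∈ Subgroup.zpowers y) :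
    g ∈ Subgroup.zpowers h ∨ h ∈ Subgroup.zpowers g := by
  obtain ⟨i, rfl⟩ := hg
  obtain ⟨j, rfl⟩ := hh
  have key : ∀ k : ℤ, Subgroup.zpowers (y ^ k) = Subgroup.zpowers (y ^ (Int.gcd k (p ^ m) : ℤ)) := by
    intro k
    apply le_antisymm
    · rw [Subgroup.zpowers_le]
      obtain ⟨c, hc⟩ : (Int.gcd k (p ^ m) : ℤ) ∣ k := Int.gcd_dvd_left _ _
      exact Subgroup.mem_zpowers_iff.mpr ⟨c, by rw [← zpow_mul, ← hc]⟩
    · rw [Subgroup.zpowers_le]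
      have hb := Int.gcd_eq_gcd_ab k (p ^ m)
      have hz : y ^ ((p ^ m : ℕ) : ℤ) = 1 := by
        rw [zpow_natCast, ← hy, pow_orderOf_eq_one]
      have key2 : (y ^ k) ^ Int.gcdA k (p ^ m) = y ^ (Int.gcd k (p ^ m) : ℤ) := by
        rw [← zpow_mul]
        have : (Int.gcd k (p ^ m) : ℤ) = k * Int.gcdA k (p ^ m) + ((p ^ m : ℕ) : ℤ) * Int.gcdB k (p ^ m) := by
          rw [hb]; norm_num
        rw [this, zpow_add, zpow_mul (y) ((p ^ m : ℕ) : ℤ), hz, one_zpow, mul_one]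
      exact Subgroup.mem_zpowers_iff.mpr ⟨_, key2⟩
  have hdvd : ∀ k : ℤ, Int.gcd k (p ^ m) ∣ p ^ m := by
    intro k
    have h1 : (Int.gcd k (p ^ m) : ℤ) ∣ ((p ^ m : ℕ) : ℤ) := by
      have := Int.gcd_dvd_right (a := k) (b := ((p ^ m : ℕ) : ℤ))
      simpa using this
    exact_mod_cast h1
  obtain ⟨α, hα⟩ := (Nat.dvd_prime_pow hp).mp (hdvd i)
  obtain ⟨β, hβ⟩ := (Nat.dvd_prime_pow hp).mp (hdvd j)
  rcases le_total α β with hab | hab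
  · right
    have : y ^ (Int.gcd j (p ^ m) : ℤ) ∈ Subgroup.zpowers (y ^ (Int.gcd i (p ^ m) : ℤ)) := by
      have : (Int.gcd j (p ^ m) : ℤ) = (Int.gcd i (p ^ m) : ℤ) * (p ^ (β - α) : ℕ) := by
        rw [hα.2, hβ.2]
        push_cast
        rw [← pow_add]
        congr 1
        omega
      rw [this, zpow_mul]
      exact zpow_mem_zpowers _ _
    have h2 : Subgroup.zpowers (y ^ j) ≤ Subgroup.zpowers (y ^ i) := by
      rw [key i, key j, Subgroup.zpowers_le]
      exact this
    exact h2 (mem_zpowers _)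
  · left
    have : y ^ (Int.gcd i (p ^ m) : ℤ) ∈ Subgroup.zpowers (y ^ (Int.gcd j (p ^ m) : ℤ)) := by
      have : (Int.gcd i (p ^ m) : ℤ) = (Int.gcd j (p ^ m) : ℤ) * (p ^ (α - β) : ℕ) := by
        rw [hα.2, hβ.2]
        push_cast
        rw [← pow_add]
        congr 1
        omega
      rw [this, zpow_mul]
      exact zpow_mem_zpowers _ _
    have h2 : Subgroup.zpowers (y ^ i) ≤ Subgroup.zpowers (y ^ j) := by
      rw [key i, key j, Subgroup.zpowers_le]
      exact this
    exact h2 (mem_zpowers _)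



variable {G : Type*} [Group G]

/-- an order-p element inside the cyclic subgroup generated by a nontrivial element -/
lemma exists_orderOf_eq_prime [Finite G] {p : ℕ} (hp : p.Prime) {w : G} {k : ℕ}
    (hw : orderOf w = p ^ k) (hk : 1 ≤ k) :
    orderOf (w ^ p ^ (k - 1)) = p := by
  rw [orderOf_pow, hw]
  have hd : p ^ (k - 1) ∣ p ^ k := pow_dvd_pow p (by omega)
  rw [Nat.gcd_eq_right hd]
  have : p ^ k = p ^ (k - 1) * p := by rw [← pow_succ]; congr 1; omega
  rw [this, Nat.mul_div_cancel_left _ (pow_pos hp.pos _)]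

/-- order-p elements of a cyclic group of order p² lie in the subgroup generated by the p-th power -/
lemma mem_zpowers_pow_p [Finite G] {p : ℕ} (hp : p.Prime) {y u : G}
    (hy : orderOf y = p ^ 2) (hu : u ∈ Subgroup.zpowers y) (hup : orderOf u = p) :
    u ∈ Subgroup.zpowers (y ^ p) := by
  obtain ⟨n, rfl⟩ : ∃ n : ℕ, y ^ n = u := by
    have hfin : IsOfFinOrder y := isOfFinOrder_of_finite y
    rw [← hfin.mem_powers_iff_mem_zpowers] at hu
    exact hu
  have h1 : (y ^ n) ^ p = 1 := by rw [← hup, pow_orderOf_eq_one]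
  rw [← pow_mul] at h1
  have h2 : p ^ 2 ∣ n * p := hy ▸ orderOf_dvd_of_pow_eq_one h1
  have h3 : p ∣ n := by
    have : p * p ∣ n * p := by rw [← pow_two]; exact h2
    exact (Nat.mul_dvd_mul_iff_right hp.pos).mp (by rwa [Nat.mul_comm p p] at this)
  obtain ⟨c, rfl⟩ := h3
  rw [pow_mul]
  exact npow_mem_zpowers _ _

/-- commutator power formula: if `u * v = v * (u * c)` with `c` commuting with `u` and `v`,
then `(u * v) ^ n = v ^ n * u ^ n * c ^ (triangle n)` -/
lemma conj_pow_nat {z a : G} (m : ℕ) : z * a ^ m * z⁻¹ = (z * a * z⁻¹) ^ m := by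
  induction m with
  | zero => simp
  | succ m ih => rw [pow_succ, pow_succ, ← ih]; group

lemma conj_pow_iter {z a : G} {t : ℕ} (h : z * a * z⁻¹ = a ^ t) :
    ∀ n : ℕ, z ^ n * a * (z ^ n)⁻¹ = a ^ t ^ n := by
  intro n
  induction n with
  | zero => simp
  | succ n ih =>
    have h2 : z ^ (n + 1) * a * (z ^ (n + 1))⁻¹ = z * (z ^ n * a * (z ^ n)⁻¹) * z⁻¹ := by
      rw [pow_succ']; group
    rw [h2, ih, conj_pow_nat, h, ← pow_mul]
    congr 1
    rw [pow_succ]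
    ring

lemma pow_of_comm_rel {u v c : G} (huv : u * v = v * (u * c))
    (hcu : c * u = u * c) (hcv : c * v = v * c) (n : ℕ) :
    (u * v) ^ n = v ^ n * (u ^ n * c ^ (∑ i ∈ Finset.range (n + 1), i)) := by
  have hcv' : ∀ m : ℕ, c ^ m * v = v * c ^ m := fun m =>
    ((show Commute c v from hcv).pow_left m).eq
  have hm : ∀ m : ℕ, u * v ^ m = v ^ m * (u * c ^ m) := by
    intro m
    induction m with
    | zero => simp
    | succ m ih =>
      calc u * v ^ (m + 1) = (u * v ^ m) * v := by rw [pow_succ, mul_assoc]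
      _ = v ^ m * (u * c ^ m) * v := by rw [ih]
      _ = v ^ m * (u * (c ^ m * v)) := by group
      _ = v ^ m * (u * (v * c ^ m)) := by rw [hcv' m]
      _ = v ^ m * ((u * v) * c ^ m) := by group
      _ = v ^ m * ((v * (u * c)) * c ^ m) := by rw [huv]
      _ = v ^ (m + 1) * (u * c ^ (m + 1)) := by rw [pow_succ, pow_succ]; group
  induction n with
  | zero => simp
  | succ n ih =>
    calc (u * v) ^ (n + 1) = (u * v) * (u * v) ^ n := by rw [pow_succ']
    _ = u * (v * (v ^ n * (u ^ n * c ^ (∑ i ∈ Finset.range (n + 1), i)))) := by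
        rw [ih]; group
    _ = (u * v ^ (n + 1)) * (u ^ n * c ^ (∑ i ∈ Finset.range (n + 1), i)) := by
        rw [pow_succ']; group
    _ = (v ^ (n + 1) * (u * c ^ (n + 1))) * (u ^ n * c ^ (∑ i ∈ Finset.range (n + 1), i)) := by
        rw [hm (n + 1)]
    _ = v ^ (n + 1) * (u * (c ^ (n + 1) * u ^ n) * c ^ (∑ i ∈ Finset.range (n + 1), i)) := by
        group
    _ = v ^ (n + 1) * (u * (u ^ n * c ^ (n + 1)) * c ^ (∑ i ∈ Finset.range (n + 1), i)) := by
        rw [(((show Commute c u from hcu).pow_left (n+1)).pow_right n).eq]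
    _ = v ^ (n + 1) * (u ^ (n + 1) * (c ^ (n + 1) * c ^ (∑ i ∈ Finset.range (n + 1), i))) := by
        rw [pow_succ']; group
    _ = v ^ (n + 1) * (u ^ (n + 1) * c ^ (∑ i ∈ Finset.range (n + 1 + 1), i)) := by
        rw [← pow_add]
        congr 1
        rw [Finset.sum_range_succ (f := fun i => i) (n := n + 1)]
        ring

lemma claw_of_normalized [Finite G] {p : ℕ} (hp : p.Prime) (hodd : Odd p)
    {a z : G} (ha : orderOf a = p ^ 2) (hz : orderOf z = p)
    (hza : z ∉ Subgroup.zpowers a) (hnorm : z * a * z⁻¹ ∈ Subgroup.zpowers a) :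
    ¬ IsClawFree (reducedPowerGraph G) := by
  intro CF
  have hp3 : 3 ≤ p := by
    have h2 := hp.two_le
    rcases hodd with ⟨r, hr⟩
    omega
  have hap2 : a ^ p ^ 2 = 1 := ha ▸ pow_orderOf_eq_one a
  have hzp : z ^ p = 1 := hz ▸ pow_orderOf_eq_one z
  obtain ⟨t, ht⟩ := exists_pow_eq hnorm
  have hconj : ∀ n : ℕ, z ^ n * a * (z ^ n)⁻¹ = a ^ t ^ n := conj_pow_iter ht.symm
  have h1 : a ^ t ^ p = a ^ 1 := by
    have h0 := hconj p
    rw [hzp] at h0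
    simpa using h0.symm
  have htp : t ^ p ≡ 1 [MOD p ^ 2] := by
    have h0 := pow_eq_pow_iff_modEq.mp h1
    rwa [ha] at h0
  haveI : Fact p.Prime := ⟨hp⟩
  have ht1 : t ≡ 1 [MOD p] := by
    have h2 : t ^ p ≡ 1 [MOD p] := htp.of_dvd (dvd_pow_self p two_ne_zero)
    have h4 : ((t ^ p : ℕ) : ZMod p) = ((1 : ℕ) : ZMod p) :=
      (ZMod.natCast_eq_natCast_iff _ _ _).mpr h2
    have h5 : ((t : ℕ) : ZMod p) = ((1 : ℕ) : ZMod p) := by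
      rw [← ZMod.pow_card (t : ZMod p)]
      push_cast at h4 ⊢
      exact h4
    exact (ZMod.natCast_eq_natCast_iff _ _ _).mp h5
  have ht0 : 1 ≤ t := by
    rcases Nat.eq_zero_or_pos t with h | h
    · exfalso
      subst h
      have h0 : (0 : ℕ) % p = 1 % p := ht1
      rw [Nat.zero_mod, Nat.one_mod_eq_one.mpr (by omega)] at h0
      omega
    · exact h
  obtain ⟨μ, hμ⟩ : ∃ μ, t = 1 + p * μ := by
    obtain ⟨μ, h⟩ := (Nat.modEq_iff_dvd' ht0).mp ht1.symm
    exact ⟨μ, by omega⟩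
  set c := a ^ (p * μ) with hc
  have hca : c * a = a * c := (Commute.pow_self a (p * μ)).eq
  have hzc : z * c * z⁻¹ = c := by
    rw [hc, conj_pow_nat, ht.symm, ← pow_mul]
    have he : t * (p * μ) = p * μ + p ^ 2 * (μ * μ) := by rw [hμ]; ring
    rw [he, pow_add, pow_mul a (p ^ 2) (μ * μ), hap2, one_pow, mul_one]
  have hzc' : z * c = c * z := by
    conv_rhs => rw [← hzc]
    group
  have hCzc : Commute c z := (show Commute z c from hzc').symm
  have hCca : Commute c a := hca
  -- basic relation z * a = a * (c * z)
  have hza1 : z * a = a * (c * z) := by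
    have h6 : z * a * z⁻¹ = a * c := by
      rw [← ht, hμ, pow_add, pow_one, ← hc]
    calc z * a = (z * a * z⁻¹) * z := by group
    _ = (a * c) * z := by rw [h6]
    _ = a * (c * z) := by group
  have hrel : ∀ i : ℕ, z ^ i * a = a * (c ^ i * z ^ i) := by
    intro i
    induction i with
    | zero => simp
    | succ i ih =>
      calc z ^ (i+1) * a = z * (z ^ i * a) := by rw [pow_succ']; group
      _ = z * (a * (c ^ i * z ^ i)) := by rw [ih]
      _ = (z * a) * (c ^ i * z ^ i) := by group
      _ = (a * (c * z)) * (c ^ i * z ^ i) := by rw [hza1]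
      _ = a * (c * (z * c ^ i) * z ^ i) := by group
      _ = a * (c * (c ^ i * z) * z ^ i) := by
          rw [(((show Commute z c from hzc')).pow_right i).eq]
      _ = a * (c ^ (i+1) * z ^ (i+1)) := by rw [pow_succ', pow_succ' z]; group
  have hS : p ∣ ∑ i ∈ Finset.range (p + 1), i := by
    have h7 : (∑ i ∈ Finset.range (p + 1), i) * 2 = (p + 1) * p :=
      Finset.sum_range_id_mul_two (p + 1)
    have h8 : p ∣ (∑ i ∈ Finset.range (p + 1), i) * 2 := by
      rw [h7]; exact ⟨p + 1, by ring⟩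
    rcases (Nat.Prime.dvd_mul hp).mp h8 with h | h
    · exact h
    · exfalso; have := Nat.le_of_dvd (by norm_num) h; omega
  obtain ⟨s, hs⟩ := hS
  have hLp : ∀ i : ℕ, (z ^ i * a) ^ p = a ^ p := by
    intro i
    have huv : z ^ i * a = a * (z ^ i * c ^ i) := by
      rw [hrel i, ((hCzc.pow_pow i i)).eq]
    have hcu : c ^ i * z ^ i = z ^ i * c ^ i := (hCzc.pow_pow i i).eq
    have hcv : c ^ i * a = a * c ^ i := (hCca.pow_left i).eq
    have hform := pow_of_comm_rel huv hcu hcv p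
    rw [hform]
    have hzi : (z ^ i) ^ p = 1 := by
      rw [← pow_mul, mul_comm, pow_mul, hzp, one_pow]
    have hci : (c ^ i) ^ (∑ j ∈ Finset.range (p + 1), j) = 1 := by
      rw [hc, ← pow_mul, ← pow_mul, hs]
      have he2 : p * μ * (i * (p * s)) = p ^ 2 * (μ * i * s) := by ring
      rw [he2, pow_mul, hap2, one_pow]
    rw [hzi, hci, mul_one, mul_one]
  have hap1 : a ^ p ≠ 1 := by
    intro h
    have hdvd : p ^ 2 ∣ p := ha ▸ orderOf_dvd_of_pow_eq_one h
    have hle := Nat.le_of_dvd hp.pos hdvd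
    have h9 : 3 * p ≤ p * p := Nat.mul_le_mul_right p hp3
    rw [pow_two] at hle
    omega
  have hL1 : ∀ i : ℕ, z ^ i * a ≠ 1 := by
    intro i h
    apply hap1
    rw [← hLp i, h, one_pow]
  have hoap : orderOf (a ^ p) = p := by
    rw [orderOf_pow' a hp.ne_zero, ha,
      Nat.gcd_eq_right (dvd_pow_self p two_ne_zero), pow_two,
      Nat.mul_div_cancel_left p hp.pos]
  have hzint : ∀ d : ℤ, ¬ ((p : ℤ) ∣ d) → z ^ d ∉ Subgroup.zpowers a := by
    intro d hd hmem
    apply hza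
    have hgcd : Int.gcd d (orderOf z) = 1 := by
      rw [hz]
      have hdvdp : Int.gcd d (p : ℤ) ∣ p := by
        have h0 := Int.gcd_dvd_right (a := d) (b := (p : ℤ))
        exact_mod_cast h0
      rcases (Nat.dvd_prime hp).mp hdvdp with h | h
      · exact h
      · exfalso
        apply hd
        have h0 := Int.gcd_dvd_left (a := d) (b := (p : ℤ))
        rwa [h] at h0
    exact (Subgroup.zpowers_le.mpr hmem) (mem_zpowers_zpow d hgcd)
  have hkey : ∀ i j : ℕ, i < 3 → j < 3 → z ^ i * a ∈ Subgroup.zpowers (z ^ j * a) → i = j := by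
    intro i j hi hj hmem
    obtain ⟨k, hk⟩ := exists_pow_eq hmem
    have hk0 : k ≠ 0 := by
      intro h; rw [h, pow_zero] at hk; exact hL1 i hk.symm
    have h7 : (a ^ p) ^ k = (a ^ p) ^ 1 := by
      rw [pow_one]
      calc (a ^ p) ^ k = ((z ^ j * a) ^ p) ^ k := by rw [hLp j]
      _ = ((z ^ j * a) ^ k) ^ p := by rw [← pow_mul, ← pow_mul, mul_comm]
      _ = (z ^ i * a) ^ p := by rw [hk]
      _ = a ^ p := hLp i
    have hk1 : k ≡ 1 [MOD p] := by
      have h0 := pow_eq_pow_iff_modEq.mp h7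
      rwa [hoap] at h0
    obtain ⟨k', hk'⟩ : ∃ k', k = 1 + p * k' := by
      obtain ⟨k', h⟩ := (Nat.modEq_iff_dvd' (by omega : 1 ≤ k)).mp hk1.symm
      exact ⟨k', by omega⟩
    have h9 : z ^ j * a ^ (1 + p * k') = z ^ i * a := by
      rw [← hk, hk']
      symm
      calc (z ^ j * a) ^ (1 + p * k')
          = (z ^ j * a) * (((z ^ j * a) ^ p) ^ k') := by
            rw [pow_add, pow_one, pow_mul]
      _ = (z ^ j * a) * (a ^ p) ^ k' := by rw [hLp j]
      _ = z ^ j * (a * a ^ (p * k')) := by rw [← pow_mul]; group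
      _ = z ^ j * a ^ (1 + p * k') := by rw [pow_add, pow_one]
    have h10 : z ^ ((i : ℤ) - (j : ℤ)) = a ^ (p * k') := by
      have h11 : (z ^ j)⁻¹ * (z ^ i) = a ^ (1 + p * k') * a⁻¹ := by
        calc (z ^ j)⁻¹ * (z ^ i) = (z ^ j)⁻¹ * ((z ^ i * a) * a⁻¹) := by group
        _ = (z ^ j)⁻¹ * ((z ^ j * a ^ (1 + p * k')) * a⁻¹) := by rw [← h9]
        _ = a ^ (1 + p * k') * a⁻¹ := by group
      have h12 : a ^ (1 + p * k') * a⁻¹ = a ^ (p * k') := by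
        rw [add_comm, pow_add, pow_one]
        group
      calc z ^ ((i : ℤ) - (j : ℤ)) = z ^ (i : ℤ) * (z ^ (j : ℤ))⁻¹ := by
            rw [zpow_sub]
      _ = (z ^ j)⁻¹ * (z ^ i) := by
            rw [zpow_natCast, zpow_natCast]
            exact (((Commute.refl z).pow_pow i j).inv_right).eq
      _ = a ^ (p * k') := h11.trans h12
    by_contra hij
    have hnd : ¬ ((p : ℤ) ∣ ((i : ℤ) - (j : ℤ))) := by
      intro hdvd
      obtain ⟨e, he⟩ := hdvd
      have h1 : (-3 : ℤ) < (p : ℤ) * e := by rw [← he]; omega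
      have h2 : (p : ℤ) * e < 3 := by rw [← he]; omega
      have he0 : e = 0 := by
        by_contra h0
        rcases lt_or_gt_of_ne h0 with h | h
        · have h3 : (p : ℤ) * e ≤ (p : ℤ) * (-1) :=
            mul_le_mul_of_nonneg_left (by omega) (by positivity)
          omega
        · have h3 : (p : ℤ) * 1 ≤ (p : ℤ) * e :=
            mul_le_mul_of_nonneg_left (by omega) (by positivity)
          omega
      rw [he0, mul_zero] at he
      exact hij (by omega)
    exact hzint _ hnd (by rw [h10]; exact npow_mem_zpowers _ _)
  -- assemble the claw
  have leaf_ne : ∀ i j : ℕ, i < 3 → j < 3 → i ≠ j → z ^ i * a ≠ z ^ j * a := by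
    intro i j hi hj hij heq
    exact hij (hkey i j hi hj (heq ▸ mem_zpowers _))
  have hcenter_ne : ∀ i : ℕ, a ^ p ≠ z ^ i * a := by
    intro i heq
    apply hap1
    have h0 : (z ^ i * a) ^ p = a ^ p := hLp i
    rw [← heq] at h0
    rw [← pow_mul, ← pow_two] at h0
    rw [← h0, hap2]
  have hadj : ∀ i : ℕ, (reducedPowerGraph G).Adj ⟨a ^ p, hap1⟩ ⟨z ^ i * a, hL1 i⟩ := by
    intro i
    refine ⟨hcenter_ne i, Or.inl ?_⟩
    show a ^ p ∈ Subgroup.zpowers (z ^ i * a)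
    exact Subgroup.mem_zpowers_iff.mpr ⟨(p : ℤ), by rw [zpow_natCast, hLp i]⟩
  have hnadj : ∀ i j : ℕ, i < 3 → j < 3 → i ≠ j →
      ¬ (reducedPowerGraph G).Adj ⟨z ^ i * a, hL1 i⟩ ⟨z ^ j * a, hL1 j⟩ := by
    intro i j hi hj hij hadj'
    rcases hadj'.2 with h | h
    · exact hij (hkey i j hi hj h)
    · exact hij (hkey j i hj hi h).symm
  refine CF ⟨⟨a ^ p, hap1⟩, ⟨z ^ 0 * a, hL1 0⟩, ⟨z ^ 1 * a, hL1 1⟩, ⟨z ^ 2 * a, hL1 2⟩,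
    ?_, ?_, ?_, hadj 0, hadj 1, hadj 2,
    hnadj 0 1 (by omega) (by omega) (by omega),
    hnadj 0 2 (by omega) (by omega) (by omega),
    hnadj 1 2 (by omega) (by omega) (by omega)⟩
  · intro h
    exact leaf_ne 0 1 (by omega) (by omega) (by omega) (congrArg Subtype.val h)
  · intro h
    exact leaf_ne 0 2 (by omega) (by omega) (by omega) (congrArg Subtype.val h)
  · intro h
    exact leaf_ne 1 2 (by omega) (by omega) (by omega) (congrArg Subtype.val h)

lemma claw_of_not_normalized [Finite G] {p : ℕ} (hp : p.Prime) (hodd : Odd p)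
    {a z z₀ : G} (ha : orderOf a = p ^ 2) (hz : orderOf z = p) (hz₀ : orderOf z₀ = p)
    (hmemall : ∀ y : G, orderOf y = p ^ 2 → z₀ ∈ Subgroup.zpowers y)
    (hno : z * a * z⁻¹ ∉ Subgroup.zpowers a) :
    ¬ IsClawFree (reducedPowerGraph G) := by
  intro CF
  have hp3 : 3 ≤ p := by
    have h2 := hp.two_le
    rcases hodd with ⟨r, hr⟩
    omega
  have hzp : z ^ p = 1 := hz ▸ pow_orderOf_eq_one z
  -- orders of conjugates
  have horder : ∀ r : ℕ, orderOf (z ^ r * a * (z ^ r)⁻¹) = p ^ 2 := by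
    intro r
    calc orderOf (z ^ r * a * (z ^ r)⁻¹)
        = orderOf ((MulAut.conj (z ^ r)).toMonoidHom a) := rfl
      _ = orderOf a := orderOf_injective _ (MulEquiv.injective _) a
      _ = p ^ 2 := ha
  -- additive closure of the set of good exponents
  have hNadd : ∀ d1 d2 : ℕ, (z ^ d1 * a * (z ^ d1)⁻¹ ∈ Subgroup.zpowers a) →
      (z ^ d2 * a * (z ^ d2)⁻¹ ∈ Subgroup.zpowers a) →
      z ^ (d1 + d2) * a * (z ^ (d1 + d2))⁻¹ ∈ Subgroup.zpowers a := by
    intro d1 d2 h1 h2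
    obtain ⟨m2, hm2⟩ := exists_pow_eq h2
    have he : z ^ (d1 + d2) * a * (z ^ (d1 + d2))⁻¹
        = z ^ d1 * (z ^ d2 * a * (z ^ d2)⁻¹) * (z ^ d1)⁻¹ := by
      rw [pow_add]; group
    rw [he, ← hm2, conj_pow_nat]
    exact pow_mem h1 m2
  have hNmul : ∀ d j : ℕ, (z ^ d * a * (z ^ d)⁻¹ ∈ Subgroup.zpowers a) →
      z ^ (d * j) * a * (z ^ (d * j))⁻¹ ∈ Subgroup.zpowers a := by
    intro d j hd
    induction j with
    | zero => simpa using mem_zpowers a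
    | succ j ih =>
      have : d * (j + 1) = d * j + d := by ring
      rw [this]
      exact hNadd _ _ ih hd
  have hcore : ∀ d : ℕ, ¬ p ∣ d → z ^ d * a * (z ^ d)⁻¹ ∈ Subgroup.zpowers a → False := by
    intro d hd hmem
    have hcop : Nat.Coprime d p := (Nat.coprime_comm.mp (hp.coprime_iff_not_dvd.mpr hd))
    obtain ⟨j, -, hj⟩ := Nat.exists_mul_mod_eq_one_of_coprime hcop (by omega)
    have hdj : d * j = p * (d * j / p) + 1 := by
      conv_lhs => rw [← Nat.div_add_mod (d * j) p]
      rw [hj]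
    have h1 := hNmul d j hmem
    rw [hdj] at h1
    have h2 : z ^ (p * (d * j / p) + 1) = z := by
      rw [pow_add, pow_one, pow_mul, hzp, one_pow, one_mul]
    rw [h2] at h1
    exact hno h1
  have hkey3 : ∀ r s : ℕ, r < 3 → s < 3 →
      z ^ r * a * (z ^ r)⁻¹ ∈ Subgroup.zpowers (z ^ s * a * (z ^ s)⁻¹) → r = s := by
    intro r s hr hs hmem
    by_contra hrs
    obtain ⟨n, hn⟩ := exists_pow_eq hmem
    rw [← conj_pow_nat] at hn
    -- hn : z ^ s * a ^ n * (z ^ s)⁻¹ = z ^ r * a * (z ^ r)⁻¹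
    set d := r + p - s with hd
    have hdz : z ^ d * z ^ s = z ^ r := by
      rw [← pow_add]
      have : d + s = r + p := by omega
      rw [this, pow_add, hzp, mul_one]
    have hzd : z ^ d = (z ^ s)⁻¹ * z ^ r := by
      rw [← hdz, (((Commute.refl z).pow_pow d s)).eq]
      group
    have hcd : z ^ d * a * (z ^ d)⁻¹ = a ^ n := by
      rw [hzd]
      calc (z ^ s)⁻¹ * z ^ r * a * ((z ^ s)⁻¹ * z ^ r)⁻¹
          = (z ^ s)⁻¹ * (z ^ r * a * (z ^ r)⁻¹) * z ^ s := by group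
      _ = (z ^ s)⁻¹ * (z ^ s * a ^ n * (z ^ s)⁻¹) * z ^ s := by rw [hn]
      _ = a ^ n := by group
    have hpd : ¬ p ∣ d := by
      intro hdvd
      have h0 : 0 < d := by omega
      have h1 : d < 2 * p := by omega
      have h2 : d = p := by
        obtain ⟨e, he⟩ := hdvd
        have he1 : 1 ≤ e := by
          by_contra h
          have he0 : e = 0 := by omega
          subst he0
          simp at he
          omega
        have he2 : e < 2 := by
          by_contra h
          have hmul : 2 * p ≤ p * e := by
            calc 2 * p = p * 2 := by ring
            _ ≤ p * e := Nat.mul_le_mul_left p (by omega)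
          omega
        have he3 : e = 1 := by omega
        subst he3
        omega
      omega
    exact hcore d hpd (by rw [hcd]; exact npow_mem_zpowers a n)
  have hz₀ne1 : z₀ ≠ 1 := by
    intro h
    rw [h, orderOf_one] at hz₀
    omega
  have hLne1 : ∀ r : ℕ, z ^ r * a * (z ^ r)⁻¹ ≠ 1 := by
    intro r h
    have h1 := horder r
    rw [h, orderOf_one] at h1
    have h9 : 3 * 3 ≤ p * p := Nat.mul_le_mul hp3 hp3
    rw [pow_two] at h1
    omega
  have hz₀neL : ∀ r : ℕ, z₀ ≠ z ^ r * a * (z ^ r)⁻¹ := by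
    intro r h
    have h1 := horder r
    rw [← h, hz₀] at h1
    rw [pow_two] at h1
    have h9 : 3 * p ≤ p * p := Nat.mul_le_mul_right p hp3
    omega
  have hadj : ∀ r : ℕ, (reducedPowerGraph G).Adj ⟨z₀, hz₀ne1⟩ ⟨z ^ r * a * (z ^ r)⁻¹, hLne1 r⟩ :=
    fun r => ⟨hz₀neL r, Or.inl (hmemall _ (horder r))⟩
  have hnadj : ∀ r s : ℕ, r < 3 → s < 3 → r ≠ s →
      ¬ (reducedPowerGraph G).Adj ⟨z ^ r * a * (z ^ r)⁻¹, hLne1 r⟩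
        ⟨z ^ s * a * (z ^ s)⁻¹, hLne1 s⟩ := by
    intro r s hr hs hrs hadj'
    rcases hadj'.2 with h | h
    · exact hrs (hkey3 r s hr hs h)
    · exact hrs (hkey3 s r hs hr h).symm
  have hLne : ∀ r s : ℕ, r < 3 → s < 3 → r ≠ s →
      z ^ r * a * (z ^ r)⁻¹ ≠ z ^ s * a * (z ^ s)⁻¹ := by
    intro r s hr hs hrs heq
    exact hrs (hkey3 r s hr hs (heq ▸ mem_zpowers _))
  exact CF ⟨⟨z₀, hz₀ne1⟩, ⟨_, hLne1 0⟩, ⟨_, hLne1 1⟩, ⟨_, hLne1 2⟩,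
    fun h => hLne 0 1 (by omega) (by omega) (by omega) (congrArg Subtype.val h),
    fun h => hLne 0 2 (by omega) (by omega) (by omega) (congrArg Subtype.val h),
    fun h => hLne 1 2 (by omega) (by omega) (by omega) (congrArg Subtype.val h),
    hadj 0, hadj 1, hadj 2,
    hnadj 0 1 (by omega) (by omega) (by omega),
    hnadj 0 2 (by omega) (by omega) (by omega),
    hnadj 1 2 (by omega) (by omega) (by omega)⟩


lemma isCyclic_of_clawfree [Finite G] {p : ℕ} (hp : p.Prime) (hodd : Odd p)
    (hG : IsPGroup p G) (CF : IsClawFree (reducedPowerGraph G))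
    {x : G} (hx : orderOf x = p ^ 2) : IsCyclic G := by
  haveI : Fact p.Prime := ⟨hp⟩
  have hp3 : 3 ≤ p := by
    have h2 := hp.two_le
    rcases hodd with ⟨r, hr⟩
    omega
  have hp21 : 1 < p ^ 2 := Nat.one_lt_pow two_ne_zero (by omega)
  haveI hnt : Nontrivial G := by
    refine ⟨x, 1, ?_⟩
    intro h
    rw [h, orderOf_one] at hx
    omega
  haveI := hG.center_nontrivial
  obtain ⟨w, hw⟩ := exists_ne (1 : Subgroup.center G)
  have hw1 : (w : G) ≠ 1 := by
    intro h
    exact hw (Subtype.ext h)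
  obtain ⟨k, hk⟩ := IsPGroup.iff_orderOf.mp hG (w : G)
  have hk1 : 1 ≤ k := by
    by_contra h
    have h0 : k = 0 := by omega
    rw [h0, pow_zero] at hk
    exact hw1 (orderOf_eq_one_iff.mp hk)
  set z₀ := (w : G) ^ p ^ (k - 1) with hz₀def
  have hz₀ : orderOf z₀ = p := exists_orderOf_eq_prime hp hk hk1
  have hz₀c : ∀ g : G, g * z₀ = z₀ * g := by
    intro g
    have hwc : g * (w : G) = (w : G) * g := Subgroup.mem_center_iff.mp w.2 g
    exact ((show Commute g (w : G) from hwc).pow_right _).eq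
  have prop2 : ∀ y : G, orderOf y = p ^ 2 → z₀ ∈ Subgroup.zpowers y := by
    intro y hy
    by_contra hne
    refine claw_of_normalized hp hodd hy hz₀ hne ?_ CF
    have h1 := hz₀c y
    have h2 : z₀ * y * z₀⁻¹ = y := by rw [← h1]; group
    rw [h2]; exact mem_zpowers y
  have prop5 : ∀ u : G, orderOf u = p → u ∈ Subgroup.zpowers z₀ := by
    intro u hu
    by_contra hnot
    have hoxp : orderOf (x ^ p) = p := by
      rw [orderOf_pow' x hp.ne_zero, hx,
        Nat.gcd_eq_right (dvd_pow_self p two_ne_zero), pow_two,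
        Nat.mul_div_cancel_left p hp.pos]
    have hux : u ∉ Subgroup.zpowers x := by
      intro hmem
      have h1 : u ∈ Subgroup.zpowers (x ^ p) := mem_zpowers_pow_p hp hx hmem hu
      have h2 : z₀ ∈ Subgroup.zpowers (x ^ p) := mem_zpowers_pow_p hp hx (prop2 x hx) hz₀
      have h3 : Subgroup.zpowers z₀ = Subgroup.zpowers (x ^ p) :=
        zpowers_eq_of_mem h2 (by rw [hz₀, hoxp])
      exact hnot (by rw [h3]; exact h1)
    by_cases hnorm : u * x * u⁻¹ ∈ Subgroup.zpowers x
    · exact claw_of_normalized hp hodd hx hu hux hnorm CF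
    · exact claw_of_not_normalized hp hodd hx hu hz₀ prop2 hnorm CF
  have hsub : ∀ g : G, g ≠ 1 → z₀ ∈ Subgroup.zpowers g := by
    intro g hg
    obtain ⟨k', hk'⟩ := IsPGroup.iff_orderOf.mp hG g
    have hk'1 : 1 ≤ k' := by
      by_contra h
      have h0 : k' = 0 := by omega
      rw [h0, pow_zero] at hk'
      exact hg (orderOf_eq_one_iff.mp hk')
    have hord : orderOf (g ^ p ^ (k' - 1)) = p := exists_orderOf_eq_prime hp hk' hk'1
    have h1 : (g ^ p ^ (k' - 1)) ∈ Subgroup.zpowers z₀ := prop5 _ hord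
    have h2 : Subgroup.zpowers (g ^ p ^ (k' - 1)) = Subgroup.zpowers z₀ :=
      zpowers_eq_of_mem h1 (by rw [hord, hz₀])
    have h3 : z₀ ∈ Subgroup.zpowers (g ^ p ^ (k' - 1)) := by
      rw [h2]; exact mem_zpowers z₀
    exact (Subgroup.zpowers_le.mpr (npow_mem_zpowers g _)) h3
  haveI : Fintype G := Fintype.ofFinite G
  obtain ⟨g, -, hgmax⟩ := Finset.exists_max_image (Finset.univ : Finset G) (fun y => orderOf y) ⟨1, Finset.mem_univ 1⟩
  refine ⟨⟨g, fun h => ?_⟩⟩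
  show h ∈ Subgroup.zpowers g
  by_contra hnot
  have hh1 : h ≠ 1 := by
    intro h0
    subst h0
    exact hnot (one_mem _)
  have hg1 : g ≠ 1 := by
    intro h0
    have h1 := hgmax h (Finset.mem_univ h)
    rw [h0, orderOf_one] at h1
    have h2 : orderOf h = 1 := le_antisymm h1 (orderOf_pos h)
    exact hh1 (orderOf_eq_one_iff.mp h2)
  have hgh : g ∉ Subgroup.zpowers h := by
    intro hmem
    have hle := Subgroup.zpowers_le.mpr hmem
    have hcard : orderOf h ≤ orderOf g := hgmax h (Finset.mem_univ h)
    have hcard2 : orderOf g ≤ orderOf h := by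
      rw [← Nat.card_zpowers, ← Nat.card_zpowers]
      exact Subgroup.card_le_of_le hle
    have h2 : Subgroup.zpowers g = Subgroup.zpowers h :=
      zpowers_eq_of_mem hmem (le_antisymm hcard2 hcard)
    exact hnot (by rw [h2]; exact mem_zpowers h)
  have hgh2 : g * h ≠ 1 := by
    intro h0
    have h1 : g⁻¹ = h := inv_eq_of_mul_eq_one_right h0
    exact hnot (by rw [← h1]; exact inv_mem (mem_zpowers g))
  have hz₀g : z₀ ∈ Subgroup.zpowers g := hsub g hg1
  have hz₀h : z₀ ∈ Subgroup.zpowers h := hsub h hh1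
  have hz₀gh : z₀ ∈ Subgroup.zpowers (g * h) := hsub _ hgh2
  obtain ⟨m, hm⟩ := IsPGroup.iff_orderOf.mp hG (g * h)
  have hng_gh : g ∉ Subgroup.zpowers (g * h) := by
    intro hmem
    have hhm : h ∈ Subgroup.zpowers (g * h) := by
      simpa using mul_mem (inv_mem hmem) (mem_zpowers (g * h))
    rcases zpowers_comparable hp hm hmem hhm with h1 | h1
    · exact hgh h1
    · exact hnot h1
  have hnh_gh : h ∉ Subgroup.zpowers (g * h) := by
    intro hmem
    apply hng_gh
    simpa using mul_mem (mem_zpowers (g * h)) (inv_mem hmem)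
  have hgh_g : g * h ∉ Subgroup.zpowers g := by
    intro hmem
    apply hnot
    simpa using mul_mem (inv_mem (mem_zpowers g)) hmem
  have hgh_h : g * h ∉ Subgroup.zpowers h := by
    intro hmem
    apply hgh
    simpa using mul_mem hmem (inv_mem (mem_zpowers h))
  have hz₀1 : z₀ ≠ 1 := by
    intro h0
    rw [h0, orderOf_one] at hz₀
    omega
  have hz₀g' : z₀ ≠ g := by
    intro h0
    exact hgh (by rw [← h0]; exact hz₀h)
  have hz₀h' : z₀ ≠ h := by
    intro h0
    exact hnot (by rw [← h0]; exact hz₀g)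
  have hz₀gh' : z₀ ≠ g * h := by
    intro h0
    exact hgh_g (by rw [← h0]; exact hz₀g)
  have hgneh : g ≠ h := by
    intro h0
    exact hgh (by rw [h0]; exact mem_zpowers h)
  have hgnegh : g ≠ g * h := fun h0 => hh1 (left_eq_mul.mp h0)
  have hhnegh : h ≠ g * h := fun h0 => hg1 (right_eq_mul.mp h0)
  exact CF ⟨⟨z₀, hz₀1⟩, ⟨g, hg1⟩, ⟨h, hh1⟩, ⟨g * h, hgh2⟩,
    fun h0 => hgneh (congrArg Subtype.val h0),
    fun h0 => hgnegh (congrArg Subtype.val h0),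
    fun h0 => hhnegh (congrArg Subtype.val h0),
    ⟨hz₀g', Or.inl hz₀g⟩, ⟨hz₀h', Or.inl hz₀h⟩, ⟨hz₀gh', Or.inl hz₀gh⟩,
    fun hadj => hadj.2.elim hgh (fun h1 => hnot h1),
    fun hadj => hadj.2.elim hng_gh hgh_g,
    fun hadj => hadj.2.elim hnh_gh hgh_h⟩

end ClawAux

theorem stmt_10 {G : Type*} [Group G] [Finite G] (p : ℕ) (hp : p.Prime)
    (hodd : Odd p) (hG : IsPGroup p G) :
    IsClawFree (reducedPowerGraph G) ↔ IsCyclic G ∨ Monoid.exponent G = p := by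
  haveI : Fact p.Prime := ⟨hp⟩
  constructor
  · intro CF
    by_cases hcyc : IsCyclic G
    · exact Or.inl hcyc
    right
    by_contra hexp
    have hex : ∃ g : G, g ^ p ≠ 1 := by
      by_contra hall
      push_neg at hall
      have hdvd : Monoid.exponent G ∣ p := Monoid.exponent_dvd_of_forall_pow_eq_one hall
      rcases (Nat.dvd_prime hp).mp hdvd with h | h
      · apply hcyc
        have hone : ∀ g : G, g = 1 := by
          intro g
          calc g = g ^ Monoid.exponent G := by rw [h, pow_one]
          _ = 1 := Monoid.pow_exponent_eq_one g
        haveI : Subsingleton G := ⟨fun a b => by rw [hone a, hone b]⟩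
        infer_instance
      · exact hexp h
    obtain ⟨g, hg⟩ := hex
    obtain ⟨k, hk⟩ := IsPGroup.iff_orderOf.mp hG g
    have hk2 : 2 ≤ k := by
      by_contra h
      have hdvd : orderOf g ∣ p := by
        rw [hk]
        rcases (by omega : k = 0 ∨ k = 1) with h0 | h0 <;> rw [h0]
        · simp
        · simp
      exact hg (orderOf_dvd_iff_pow_eq_one.mp hdvd)
    have hx2 : orderOf (g ^ p ^ (k - 2)) = p ^ 2 := by
      rw [orderOf_pow' g (pow_ne_zero _ hp.pos.ne'), hk,
        Nat.gcd_eq_right (pow_dvd_pow p (by omega)),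
        Nat.pow_div (by omega) hp.pos]
      congr 1
      omega
    exact hcyc (ClawAux.isCyclic_of_clawfree hp hodd hG CF hx2)
  · rintro (hcyc | hexp)
    · obtain ⟨g0, hg0⟩ := hcyc.exists_generator
      obtain ⟨m, hm⟩ := IsPGroup.iff_orderOf.mp hG g0
      rintro ⟨b, a1, a2, a3, h12, -, -, -, -, -, hn12, -, -⟩
      apply hn12
      exact ⟨fun h => h12 (Subtype.ext h),
        ClawAux.zpowers_comparable hp hm (hg0 (a1 : G)) (hg0 (a2 : G))⟩
    · have hordp : ∀ g : G, g ≠ 1 → orderOf g = p := by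
        intro g hg
        have hdvd : orderOf g ∣ p := hexp ▸ Monoid.order_dvd_exponent g
        rcases (Nat.dvd_prime hp).mp hdvd with h | h
        · exact absurd (orderOf_eq_one_iff.mp h) hg
        · exact h
      rintro ⟨b, a1, a2, a3, h12, -, -, hb1, hb2, -, hn12, -, -⟩
      apply hn12
      have key : ∀ u v : {g : G // g ≠ 1}, (reducedPowerGraph G).Adj u v →
          Subgroup.zpowers (u : G) = Subgroup.zpowers (v : G) := by
        intro u v huv
        rcases huv.2 with h | h
        · exact ClawAux.zpowers_eq_of_mem h (by rw [hordp _ u.2, hordp _ v.2])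
        · exact (ClawAux.zpowers_eq_of_mem h (by rw [hordp _ u.2, hordp _ v.2])).symm
      have h1 := key _ _ hb1
      have h2 := key _ _ hb2
      refine ⟨fun h => h12 (Subtype.ext h), Or.inl ?_⟩
      have hmem : (a1 : G) ∈ Subgroup.zpowers (a1 : G) := Subgroup.mem_zpowers _
      rwa [← h1, h2] at hmem
end

section
/- Let G be a finite 2-group of exponent 4. If the reduced power graph P*(G) is claw-free, then G is Q₈-free, i.e. no quotient of any subgroup of G is isomorphic to the quaternion group Q₈ of order 8. -/
/-- A "claw configuration": three order-4 elements with a common square,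
generating pairwise distinct cyclic subgroups. -/
def Config (K : Type*) [Group K] : Prop :=
  ∃ u v w : K, u ^ 2 = v ^ 2 ∧ u ^ 2 = w ^ 2 ∧ u ^ 2 ≠ 1 ∧ u ^ 4 = 1 ∧
    v ≠ u ∧ v ≠ u⁻¹ ∧ w ≠ u ∧ w ≠ u⁻¹ ∧ w ≠ v ∧ w ≠ v⁻¹

lemma config_of_inj {A B : Type*} [Group A] [Group B] (f : A →* B)
    (hf : Function.Injective f) (h : Config A) : Config B := by
  obtain ⟨u, v, w, h1, h2, h3, h4, h5, h6, h7, h8, h9, h10⟩ := h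
  refine ⟨f u, f v, f w, ?_, ?_, ?_, ?_, ?_, ?_, ?_, ?_, ?_, ?_⟩
  · rw [← map_pow, ← map_pow, h1]
  · rw [← map_pow, ← map_pow, h2]
  · rw [← map_pow]; exact fun hh => h3 (hf (by rw [hh, map_one]))
  · rw [← map_pow, h4, map_one]
  · exact fun hh => h5 (hf hh)
  · rw [← map_inv]; exact fun hh => h6 (hf hh)
  · exact fun hh => h7 (hf hh)
  · rw [← map_inv]; exact fun hh => h8 (hf hh)
  · exact fun hh => h9 (hf hh)
  · rw [← map_inv]; exact fun hh => h10 (hf hh)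

lemma configQ8 : Config (QuaternionGroup 2) :=
  ⟨QuaternionGroup.a 1, QuaternionGroup.xa 0, QuaternionGroup.xa 1,
    by decide, by decide, by decide, by decide, by decide, by decide,
    by decide, by decide, by decide, by decide⟩

/-- Lifting a claw configuration through a central quotient of order two. -/
lemma config_lift {K : Type*} [Group K] (Z : Subgroup K) [Z.Normal] {z : K}
    (hz1 : z ≠ 1) (hz2 : z ^ 2 = 1) (hzc : ∀ g : K, g * z = z * g) (hzZ : z ∈ Z)
    (hexp4 : ∀ g : K, g ^ 4 = 1) {p q : K} (hpq : p ^ 2 = q ^ 2)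
    (h1 : QuotientGroup.mk' Z (p ^ 2) ≠ 1)
    (h2 : QuotientGroup.mk' Z q ≠ QuotientGroup.mk' Z p)
    (h3 : QuotientGroup.mk' Z q ≠ (QuotientGroup.mk' Z p)⁻¹) : Config K := by
  have hmkz : QuotientGroup.mk' Z z = 1 := by
    rw [QuotientGroup.mk'_apply, QuotientGroup.eq_one_iff]; exact hzZ
  have hc : Commute p z := hzc p
  have hpz2 : (p * z) ^ 2 = p ^ 2 := by rw [hc.mul_pow, hz2, mul_one]
  refine ⟨p, q, p * z, hpq, hpz2.symm, ?_, hexp4 p, ?_, ?_, ?_, ?_, ?_, ?_⟩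
  · intro h; apply h1; rw [h, map_one]
  · intro h; apply h2; rw [h]
  · intro h; apply h3; rw [h, map_inv]
  · intro h; exact hz1 (mul_eq_left.mp h)
  · intro h
    apply h1
    have hz' : p ^ 2 = z⁻¹ :=
      eq_inv_of_mul_eq_one_right
        (by rw [← (hc.pow_left 2).eq, pow_two, mul_assoc, h, mul_inv_cancel])
    rw [hz', map_inv, hmkz, inv_one]
  · intro h; apply h2; rw [← h, map_mul, hmkz, mul_one]
  · intro h
    apply h3
    have hq : q = (p * z)⁻¹ := inv_eq_iff_eq_inv.mp h.symm
    rw [hq, map_inv, map_mul, hmkz, mul_one]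

lemma zpow_cases {G : Type*} [Group G] {x y : G} (hy : y ^ 4 = 1)
    (h : x ∈ Subgroup.zpowers y) : x = 1 ∨ x = y ∨ x = y ^ 2 ∨ x = y⁻¹ := by
  obtain ⟨k, rfl⟩ := h
  show y ^ k = 1 ∨ y ^ k = y ∨ y ^ k = y ^ 2 ∨ y ^ k = y⁻¹
  have h4 : y ^ (4 : ℤ) = 1 := by
    rw [show (4 : ℤ) = ((4 : ℕ) : ℤ) by norm_num, zpow_natCast, hy]
  have key : y ^ k = y ^ (k % 4) := by
    conv_lhs => rw [← Int.mul_ediv_add_emod k 4]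
    rw [zpow_add, zpow_mul, h4, one_zpow, one_mul]
  have hk : k % 4 = 0 ∨ k % 4 = 1 ∨ k % 4 = 2 ∨ k % 4 = 3 := by omega
  rcases hk with h0 | h0 | h0 | h0 <;> rw [key, h0]
  · exact Or.inl (zpow_zero y)
  · exact Or.inr (Or.inl (zpow_one y))
  · refine Or.inr (Or.inr (Or.inl ?_))
    rw [show (2 : ℤ) = ((2 : ℕ) : ℤ) by norm_num, zpow_natCast]
  · refine Or.inr (Or.inr (Or.inr ?_))
    rw [show (3 : ℤ) = 4 - 1 by norm_num, zpow_sub_one, h4, one_mul]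

lemma nonadj {G : Type*} [Group G] {x y : G} (hx2 : x ^ 2 ≠ 1) (hx4 : x ^ 4 = 1)
    (hsq : x ^ 2 = y ^ 2) (h1 : y ≠ x) (h2 : y ≠ x⁻¹) : ¬ PowAdj x y := by
  have hy4 : y ^ 4 = 1 := by
    rw [show 4 = 2 * 2 from rfl, pow_mul, ← hsq, ← pow_mul]; exact hx4
  rintro ⟨hne, h | h⟩
  · rcases zpow_cases hy4 h with h0 | h0 | h0 | h0
    · exact hx2 (by rw [h0, one_pow])
    · exact hne h0
    · exact hx2 (by rw [h0, ← pow_mul]; exact hy4)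
    · exact h2 (by rw [h0, inv_inv])
  · rcases zpow_cases hx4 h with h0 | h0 | h0 | h0
    · exact hx2 (by rw [hsq, h0, one_pow])
    · exact h1 h0
    · exact hx2 (by rw [hsq, h0, ← pow_mul]; exact hx4)
    · exact h2 h0

lemma adjsq {G : Type*} [Group G] {x y : G} (hx2 : x ^ 2 ≠ 1) (hx4 : x ^ 4 = 1)
    (hsq : x ^ 2 = y ^ 2) : PowAdj (x ^ 2) y := by
  refine ⟨?_, Or.inl (Subgroup.mem_zpowers_iff.mpr ⟨2, ?_⟩)⟩
  · intro h
    apply hx2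
    rw [hsq, ← h, ← pow_mul]
    exact hx4
  · rw [show (2 : ℤ) = ((2 : ℕ) : ℤ) from rfl, zpow_natCast, hsq]

universe u

/-- Key induction: a finite 2-group of exponent dividing 4 admitting a
surjection onto `Q₈` contains a claw configuration. -/
lemma key : ∀ (n : ℕ) (K : Type u) [Group K] [Finite K], Nat.card K = n →
    IsPGroup 2 K → (∀ g : K, g ^ 4 = 1) →
    ∀ φ : K →* QuaternionGroup 2, Function.Surjective φ → Config K := by
  intro n
  induction n using Nat.strong_induction_on with
  | _ n ih =>
  intro K _ _ hcard hp hexp4 φ hφ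
  haveI : Fact (Nat.Prime 2) := ⟨Nat.prime_two⟩
  by_cases hinj : Function.Injective φ
  · exact config_of_inj (MulEquiv.ofBijective φ ⟨hinj, hφ⟩).symm.toMonoidHom
      (MulEquiv.ofBijective φ ⟨hinj, hφ⟩).symm.injective configQ8
  · -- the kernel is nontrivial
    obtain ⟨x, hx1, hx2⟩ : ∃ x, φ x = 1 ∧ x ≠ 1 := by
      rw [injective_iff_map_eq_one] at hinj
      push_neg at hinj
      exact hinj
    set N := φ.ker with hNdef
    haveI : Nontrivial N :=
      ⟨⟨x, MonoidHom.mem_ker.mpr hx1⟩, 1, by simp [Subtype.ext_iff, hx2]⟩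
    have hdvd : 2 ∣ Nat.card N := by
      obtain ⟨k, hk0, hk⟩ := (hp.to_subgroup N).nontrivial_iff_card.mp inferInstance
      rw [hk]
      exact dvd_pow_self 2 hk0.ne'
    have hpc : IsPGroup 2 (ConjAct K) := hp.of_equiv ConjAct.toConjAct
    have h1fix : (1 : N) ∈ MulAction.fixedPoints (ConjAct K) N := by
      intro g
      apply Subtype.ext
      rw [ConjAct.Subgroup.val_conj_smul]
      simp
    obtain ⟨b, hbf, hb1⟩ :=
      hpc.exists_fixed_point_of_prime_dvd_card_of_fixed_point N hdvd h1fix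
    have hbc : ∀ g : K, g * (b : K) = (b : K) * g := by
      intro g
      have h2 := congrArg Subtype.val (hbf (ConjAct.toConjAct g))
      rw [ConjAct.Subgroup.val_conj_smul] at h2
      have h3 : g * (b : K) * g⁻¹ = (b : K) := by simpa [ConjAct.toConjAct_smul] using h2
      exact mul_inv_eq_iff_eq_mul.mp h3
    have hbK1 : (b : K) ≠ 1 := fun h => hb1 (Subtype.ext h).symm
    obtain ⟨z, hz1, hz2, hzN, hzc⟩ :
        ∃ z : K, z ≠ 1 ∧ z ^ 2 = 1 ∧ z ∈ N ∧ ∀ g : K, g * z = z * g := by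
      by_cases hb2 : (b : K) ^ 2 = 1
      · exact ⟨b, hbK1, hb2, b.2, hbc⟩
      · refine ⟨(b : K) ^ 2, hb2, ?_, N.pow_mem b.2 2, ?_⟩
        · rw [← pow_mul]
          exact hexp4 _
        · intro g
          have hc : Commute g (b : K) := hbc g
          exact (hc.pow_right 2).eq
    set Z := Subgroup.zpowers z with hZdef
    have hcommz : ∀ g : K, Commute g z := fun g => hzc g
    haveI : Z.Normal := by
      constructor
      intro m hm g
      obtain ⟨k, rfl⟩ := hm
      show g * z ^ k * g⁻¹ ∈ Z
      rw [((hcommz g).zpow_right k).eq, mul_assoc, mul_inv_cancel, mul_one]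
      exact zpow_mem (Subgroup.mem_zpowers z) k
    have hZN : Z ≤ N := (Subgroup.zpowers_le).mpr hzN
    have hZmem : ∀ m ∈ Z, m = 1 ∨ m = z := by
      rintro m ⟨k, rfl⟩
      show z ^ k = 1 ∨ z ^ k = z
      have hz2' : z ^ (2 : ℤ) = 1 := by
        rw [show (2 : ℤ) = ((2 : ℕ) : ℤ) from rfl, zpow_natCast, hz2]
      rcases Int.even_or_odd k with ⟨j, hj⟩ | ⟨j, hj⟩
      · left
        rw [hj, show j + j = 2 * j by ring, zpow_mul, hz2', one_zpow]
      · right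
        rw [hj, zpow_add, zpow_mul, hz2', one_zpow, one_mul, zpow_one]
    have hmlt : Nat.card (K ⧸ Z) < n := by
      have h1 : Nat.card K = Nat.card (K ⧸ Z) * Nat.card Z :=
        Subgroup.card_eq_card_quotient_mul_card_subgroup Z
      have h2 : 2 ≤ Nat.card Z := by
        haveI : Nontrivial Z :=
          ⟨⟨z, Subgroup.mem_zpowers z⟩, 1, by simp [Subtype.ext_iff, hz1]⟩
        exact Finite.one_lt_card
      have h3 : 0 < Nat.card (K ⧸ Z) := Nat.card_pos
      calc Nat.card (K ⧸ Z) < Nat.card (K ⧸ Z) * 2 := by omega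
        _ ≤ Nat.card (K ⧸ Z) * Nat.card Z := Nat.mul_le_mul_left _ h2
        _ = Nat.card K := h1.symm
        _ = n := hcard
    have hZker : ∀ m ∈ Z, φ m = 1 := fun m hm => MonoidHom.mem_ker.mp (hZN hm)
    set φ' := QuotientGroup.lift Z φ hZker with hφ'def
    have hφ' : Function.Surjective φ' := by
      intro q
      obtain ⟨k, hk⟩ := hφ q
      exact ⟨QuotientGroup.mk k, hk⟩
    have hexp4' : ∀ g : K ⧸ Z, g ^ 4 = 1 := by
      intro g
      obtain ⟨k, rfl⟩ := QuotientGroup.mk'_surjective Z g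
      rw [← map_pow, hexp4, map_one]
    obtain ⟨u', v', w', e1, e2, e3, e4, e5, e6, e7, e8, e9, e10⟩ :=
      ih _ hmlt (K ⧸ Z) rfl (hp.to_quotient Z) hexp4' φ' hφ'
    obtain ⟨u, rfl⟩ := QuotientGroup.mk'_surjective Z u'
    obtain ⟨v, rfl⟩ := QuotientGroup.mk'_surjective Z v'
    obtain ⟨w, rfl⟩ := QuotientGroup.mk'_surjective Z w'
    have hcase : ∀ p q : K,
        (QuotientGroup.mk' Z p) ^ 2 = (QuotientGroup.mk' Z q) ^ 2 →
        q ^ 2 = p ^ 2 ∨ q ^ 2 = p ^ 2 * z := by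
      intro p q h
      have h' : QuotientGroup.mk' Z (p ^ 2) = QuotientGroup.mk' Z (q ^ 2) := by
        rw [map_pow, map_pow, h]
      obtain ⟨m, hmZ, hm⟩ := (QuotientGroup.mk'_eq_mk' (N := Z)).mp h'
      rcases hZmem m hmZ with h0 | h0
      · left; rw [← hm, h0, mul_one]
      · right; rw [← hm, h0]
    have hmku2 : QuotientGroup.mk' Z (u ^ 2) ≠ 1 := by
      rw [map_pow]; exact e3
    rcases hcase u v e1 with hv | hv
    · exact config_lift Z hz1 hz2 hzc (Subgroup.mem_zpowers z) hexp4 hv.symm hmku2 e5 e6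
    · rcases hcase u w e2 with hw | hw
      · exact config_lift Z hz1 hz2 hzc (Subgroup.mem_zpowers z) hexp4 hw.symm hmku2 e7 e8
      · have hvw : v ^ 2 = w ^ 2 := by rw [hv, hw]
        have hmkv2 : QuotientGroup.mk' Z (v ^ 2) ≠ 1 := by
          rw [map_pow, ← e1]; exact e3
        exact config_lift Z hz1 hz2 hzc (Subgroup.mem_zpowers z) hexp4 hvw hmkv2 e9 e10

theorem stmt_12 {G : Type*} [Group G] [Finite G] (hG : IsPGroup 2 G)
    (hexp : Monoid.exponent G = 4) (hcf : IsClawFree (reducedPowerGraph G)) :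
    ∀ (H : Subgroup G) (N : Subgroup H) [N.Normal],
      IsEmpty ((H ⧸ N) ≃* QuaternionGroup 2) := by
  intro H N hN
  constructor
  intro e
  have hexp4 : ∀ g : G, g ^ 4 = 1 := fun g => by
    rw [← hexp]; exact Monoid.pow_exponent_eq_one g
  have hexp4H : ∀ h : H, h ^ 4 = 1 := fun h =>
    Subtype.ext (by simpa using hexp4 (h : G))
  let φ : H →* QuaternionGroup 2 := e.toMonoidHom.comp (QuotientGroup.mk' N)
  have hφ : Function.Surjective φ :=
    e.surjective.comp (QuotientGroup.mk'_surjective N)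
  have hcfgH : Config H := key (Nat.card H) H rfl (hG.to_subgroup H) hexp4H φ hφ
  obtain ⟨u, v, w, h1, h2, h3, h4, h5, h6, h7, h8, h9, h10⟩ :=
    config_of_inj H.subtype (Subgroup.subtype_injective H) hcfgH
  have hu1 : u ≠ 1 := fun h => h3 (by rw [h, one_pow])
  have hv1 : v ≠ 1 := fun h => h3 (by rw [h1, h, one_pow])
  have hw1 : w ≠ 1 := fun h => h3 (by rw [h2, h, one_pow])
  apply hcf
  refine ⟨⟨u ^ 2, h3⟩, ⟨u, hu1⟩, ⟨v, hv1⟩, ⟨w, hw1⟩,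
    fun hh => h5 (congrArg Subtype.val hh).symm,
    fun hh => h7 (congrArg Subtype.val hh).symm,
    fun hh => h9 (congrArg Subtype.val hh).symm,
    adjsq h3 h4 rfl, adjsq h3 h4 h1, adjsq h3 h4 h2,
    nonadj h3 h4 h1 h5 h6, nonadj h3 h4 h2 h7 h8, ?_⟩
  have hv2 : v ^ 2 ≠ 1 := by rw [← h1]; exact h3
  have hv4 : v ^ 4 = 1 := by
    rw [show 4 = 2 * 2 from rfl, pow_mul, ← h1, ← pow_mul]; exact h4
  exact nonadj hv2 hv4 (h1 ▸ h2) h9 h10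
end
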